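/- arXiv:1807.01489 — 11 statements merged into one kernel-verified Lean document; each statement's English description precedes it below -/
import Mathlib

section
/- Let S be a commutative semiring, n ≥ 1, a ∈ S an invertible element, b ∈ S^{n-1} a vector all of whose entries are additively invertible, C ∈ M_{n-1}(S), and M = [[a, bᵀ],[b, C]] ∈ M_n(S). Then [[a, 0],[0, M/a]] = [[1, 0],[a⁻¹(-b), I]] · M · [[1, 0],[a⁻¹(-b), I]]ᵀ, where M/a = C + a⁻¹(-b)bᵀ is the Schur complement of a in M. -/
open Matrix

/-- `[[a, 0],[0, M/a]] = E * M * Eᵀ` where `E = [[1, 0],[a⁻¹(-b), I]]`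
and `M/a = C + a⁻¹(-b)bᵀ` is the Schur complement of `a` in `M = [[a, bᵀ],[b, C]]`. -/
theorem stmt_1 {S : Type*} [CommSemiring S] (m : ℕ)
    (a a' : S) (ha : a * a' = 1)
    (b b' : Fin m → S) (hb : ∀ i, b i + b' i = 0)
    (C : Matrix (Fin m) (Fin m) S)
    (M : Matrix (Fin 1 ⊕ Fin m) (Fin 1 ⊕ Fin m) S)
    (hM : M = Matrix.fromBlocks (Matrix.of fun _ _ => a)
        (Matrix.of fun (_ : Fin 1) j => b j)
        (Matrix.of fun i (_ : Fin 1) => b i) C)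
    (E : Matrix (Fin 1 ⊕ Fin m) (Fin 1 ⊕ Fin m) S)
    (hE : E = Matrix.fromBlocks (1 : Matrix (Fin 1) (Fin 1) S) 0
        (Matrix.of fun i (_ : Fin 1) => a' * b' i) (1 : Matrix (Fin m) (Fin m) S)) :
    Matrix.fromBlocks (Matrix.of fun (_ : Fin 1) (_ : Fin 1) => a) 0 0
        (C + Matrix.of fun i j => a' * b' i * b j) = E * M * Eᵀ := by
  subst hM hE
  have key : ∀ i, a' * b' i * a + b i = 0 := fun i => by
    have h1 : a' * b' i * a = b' i := by
      rw [mul_comm (a' * b' i) a, ← mul_assoc, ha, one_mul]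
    rw [h1, add_comm]; exact hb i
  rw [fromBlocks_transpose, fromBlocks_multiply, fromBlocks_multiply]
  simp only [Matrix.one_mul, Matrix.mul_one, Matrix.zero_mul, Matrix.mul_zero,
    add_zero, zero_add, transpose_one, transpose_zero]
  ext i j
  rcases i with i | i <;> rcases j with j | j <;>
    simp only [fromBlocks_apply₁₁, fromBlocks_apply₁₂, fromBlocks_apply₂₁,
      fromBlocks_apply₂₂, Matrix.add_apply, Matrix.mul_apply, Matrix.of_apply,
      transpose_apply, Fin.sum_univ_one, Matrix.zero_apply]
  · calc (0 : S) = (a' * b' j * a + b j) := (key j).symm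
      _ = a * (a' * b' j) + b j := by ring
  · calc (0 : S) = a' * b' i * a + b i := (key i).symm
      _ = _ := by ring
  · have hk := key i
    calc C i j + a' * b' i * b j
        = (a' * b' i * a + b i) * (a' * b' j) + (a' * b' i * b j + C i j) := by
          rw [hk]; ring
      _ = _ := by ring
end

section
/- Let S be a commutative semiring, n ≥ 1, a ∈ S an invertible element, b ∈ S^{n-1} a vector all of whose entries are additively invertible, C ∈ M_{n-1}(S), and M = [[a, bᵀ],[b, C]] ∈ M_n(S). If M has a nonnegative numerical range, then the Schur complement M/a = C + a⁻¹(-b)bᵀ ∈ M_{n-1}(S) has a nonnegative numerical range. -/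
open Matrix

/-- If `M = [[a, bᵀ],[b, C]]` (with `a` invertible and the entries of `b`
additively invertible) has a nonnegative numerical range, then so does the Schur
complement `M/a = C + a⁻¹(-b)bᵀ`. -/
theorem stmt_3 {S : Type*} [CommSemiring S] (m : ℕ)
    (a a' : S) (ha : a * a' = 1)
    (b b' : Fin m → S) (hb : ∀ i, b i + b' i = 0)
    (C : Matrix (Fin m) (Fin m) S)
    (M : Matrix (Fin 1 ⊕ Fin m) (Fin 1 ⊕ Fin m) S)
    (hM : M = Matrix.fromBlocks (Matrix.of fun _ _ => a)
        (Matrix.of fun (_ : Fin 1) j => b j)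
        (Matrix.of fun i (_ : Fin 1) => b i) C)
    (hnnr : ∀ x : Fin 1 ⊕ Fin m → S, ∃ c : S, x ⬝ᵥ M.mulVec x = c ^ 2) :
    ∀ y : Fin m → S, ∃ c : S,
      y ⬝ᵥ (C + Matrix.of fun i j => a' * b' i * b j).mulVec y = c ^ 2 := by
  intro y
  set s := b ⬝ᵥ y with hs
  set t := b' ⬝ᵥ y with ht
  have hts : t + s = 0 := by
    rw [ht, hs, ← add_dotProduct]
    have : (b' + b) = 0 := by
      funext i; simpa [add_comm] using hb i
    rw [this, zero_dotProduct]
  obtain ⟨c, hc⟩ := hnnr (Sum.elim (fun _ => a' * t) y)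
  refine ⟨c, ?_⟩
  rw [← hc, hM]
  have key : (Sum.elim (fun _ : Fin 1 => a' * t) y) ⬝ᵥ
      (Matrix.fromBlocks (Matrix.of fun _ _ => a)
        (Matrix.of fun (_ : Fin 1) j => b j)
        (Matrix.of fun i (_ : Fin 1) => b i) C).mulVec
      (Sum.elim (fun _ : Fin 1 => a' * t) y)
      = a' * t * (a * (a' * t) + s) + (s * (a' * t) + y ⬝ᵥ C.mulVec y) := by
    rw [Matrix.fromBlocks_mulVec, sumElim_dotProduct_sumElim]
    congr 1
    · simp [dotProduct, Matrix.mulVec, Fin.sum_univ_one, hs]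
    · simp only [dotProduct_add]
      congr 1
      simp only [dotProduct, Matrix.mulVec, Fin.sum_univ_one, Matrix.of_apply, hs,
        Finset.sum_mul, Function.comp, Sum.elim_inl]
      exact Finset.sum_congr rfl fun i _ => by ring
  have key2 : y ⬝ᵥ (C + Matrix.of fun i j => a' * b' i * b j).mulVec y
      = y ⬝ᵥ C.mulVec y + t * (a' * s) := by
    rw [Matrix.add_mulVec, dotProduct_add]
    congr 1
    simp [dotProduct, Matrix.mulVec, ht, hs, Finset.sum_mul, Finset.mul_sum]
    rw [Finset.sum_comm]
    exact Finset.sum_congr rfl fun i _ => Finset.sum_congr rfl fun j _ => by ring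
  rw [key, key2]
  have h1 : a * (a' * t) = t := by rw [← mul_assoc, ha, one_mul]
  rw [h1]
  have : a' * t * (t + s) + (s * (a' * t) + y ⬝ᵥ C.mulVec y)
      = y ⬝ᵥ C.mulVec y + t * (a' * s) := by
    rw [hts]; ring
  exact this.symm
end

section
/- Let S be a commutative semiring, n ≥ 2, a ∈ S, b ∈ S^{n-1}, C ∈ M_{n-1}(S), and M = [[a, bᵀ],[b, C]] ∈ M_n(S). If M is strongly invertible, then every entry of the vector b is additively invertible in S. -/
open Matrix

/-- A matrix over a commutative semiring is strongly invertible if all of its leading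
principal submatrices (of sizes `1, …, n`) are invertible. -/
def StronglyInvertible {S : Type*} [CommSemiring S] {n : ℕ}
    (M : Matrix (Fin n) (Fin n) S) : Prop :=
  ∀ (k : ℕ) (h : k ≤ n), 0 < k →
    IsUnit (M.submatrix (Fin.castLE h) (Fin.castLE h))

section Aux

variable {S : Type*} [CommSemiring S]

private lemma aux_addinv_add {x y : S} (hx : ∃ c, x + c = 0) (hy : ∃ c, y + c = 0) :
    ∃ c, x + y + c = 0 := by
  obtain ⟨cx, hcx⟩ := hx
  obtain ⟨cy, hcy⟩ := hy
  exact ⟨cx + cy, by rw [add_add_add_comm, hcx, hcy, add_zero]⟩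

private lemma aux_addinv_mul {x : S} (y : S) (hx : ∃ c, x + c = 0) :
    ∃ c, y * x + c = 0 := by
  obtain ⟨c, hc⟩ := hx
  exact ⟨y * c, by rw [← mul_add, hc, mul_zero]⟩

private lemma aux_addinv_sum {ι : Type*} (s : Finset ι) (f : ι → S)
    (h : ∀ j ∈ s, ∃ c, f j + c = 0) : ∃ c, (∑ j ∈ s, f j) + c = 0 := by
  classical
  induction s using Finset.induction_on with
  | empty => exact ⟨0, by simp⟩
  | @insert a s ha ih =>
    rw [Finset.sum_insert ha]
    exact aux_addinv_add (h a (Finset.mem_insert_self a s))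
      (ih fun j hj => h j (Finset.mem_insert_of_mem hj))

private lemma aux_addinv_term {ι : Type*} {s : Finset ι} {f : ι → S} {j : ι} (hj : j ∈ s)
    (h : ∃ c, (∑ k ∈ s, f k) + c = 0) : ∃ c, f j + c = 0 := by
  classical
  obtain ⟨c, hc⟩ := h
  refine ⟨(∑ k ∈ s.erase j, f k) + c, ?_⟩
  rw [← add_assoc, Finset.add_sum_erase _ _ hj, hc]

end Aux

/-- If `M = [[a, bᵀ],[b, C]] ∈ M_n(S)` (with `n = m + 1 ≥ 2`) is strongly
invertible, then every entry of `b` is additively invertible. -/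
theorem stmt_4 {S : Type*} [CommSemiring S] (m : ℕ) (hm : 1 ≤ m)
    (a : S) (b : Fin m → S) (C : Matrix (Fin m) (Fin m) S)
    (M : Matrix (Fin (m + 1)) (Fin (m + 1)) S)
    (hM : M = Matrix.of (Fin.cons (Fin.cons a b) (fun i => Fin.cons (b i) (C i))))
    (hsi : StronglyInvertible M) :
    ∀ i : Fin m, ∃ c : S, b i + c = 0 := by
  classical
  -- `a` is a unit
  have h1le : (1 : ℕ) ≤ m + 1 := by omega
  obtain ⟨B, hB, -⟩ := isUnit_iff_exists.mp (hsi 1 h1le one_pos)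
  have ha : ∃ a', a * a' = 1 := by
    refine ⟨B 0 0, ?_⟩
    have h00 := congrFun (congrFun hB 0) 0
    rw [Matrix.mul_apply] at h00
    simp only [Fin.sum_univ_one, Matrix.submatrix_apply, Matrix.one_apply_eq] at h00
    have hc0 : Fin.castLE h1le (0 : Fin 1) = (0 : Fin (m + 1)) := by
      ext; simp
    rw [hc0] at h00
    rw [hM] at h00
    simpa using h00
  obtain ⟨a', ha'⟩ := ha
  -- `M` itself is invertible
  have hsub : M.submatrix (Fin.castLE (le_refl (m + 1))) (Fin.castLE (le_refl (m + 1))) = M := by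
    ext i j
    simp [Matrix.submatrix_apply]
  obtain ⟨N, hMN, hNM⟩ := isUnit_iff_exists.mp (hsub ▸ hsi (m + 1) le_rfl (by omega))
  have eMN : ∀ p q, (∑ k, M p k * N k q) = (1 : Matrix (Fin (m+1)) (Fin (m+1)) S) p q := by
    intro p q; rw [← Matrix.mul_apply, hMN]
  have eNM : ∀ p q, (∑ k, N p k * M k q) = (1 : Matrix (Fin (m+1)) (Fin (m+1)) S) p q := by
    intro p q; rw [← Matrix.mul_apply, hNM]
  -- entries of M
  have hM00 : M 0 0 = a := by rw [hM]; simp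
  have hM0s : ∀ j : Fin m, M 0 j.succ = b j := by intro j; rw [hM]; simp
  have hMs0 : ∀ i : Fin m, M i.succ 0 = b i := by intro i; rw [hM]; simp
  have hMss : ∀ i j : Fin m, M i.succ j.succ = C i j := by intro i j; rw [hM]; simp
  intro i
  -- Equation E2 : a * N 0 i.succ + ∑ j, b j * N j.succ i.succ = 0
  have E2 : a * N 0 i.succ + ∑ j : Fin m, b j * N j.succ i.succ = 0 := by
    have := eMN 0 i.succ
    rw [Fin.sum_univ_succ] at this
    rw [Matrix.one_apply_ne (Fin.succ_ne_zero i).symm] at this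
    rw [hM00] at this
    simp only [hM0s] at this
    exact this
  -- hence N 0 i.succ is additively invertible
  have hN0 : ∃ c, N 0 i.succ + c = 0 := by
    have h1 : ∃ c, a * N 0 i.succ + c = 0 := ⟨_, E2⟩
    obtain ⟨c, hc⟩ := aux_addinv_mul a' h1
    refine ⟨c, ?_⟩
    rw [← mul_assoc, mul_comm a' a, ha', one_mul] at hc
    exact hc
  -- Equation E3 (for each j): N j.succ i.succ * b i is additively invertible
  have E3 : ∀ j : Fin m, ∃ c, N j.succ i.succ * b i + c = 0 := by
    intro j
    have := eNM j.succ 0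
    rw [Fin.sum_univ_succ] at this
    rw [Matrix.one_apply_ne (Fin.succ_ne_zero j)] at this
    rw [hM00] at this
    simp only [hMs0] at this
    -- this : N j.succ 0 * a + ∑ k, N j.succ k.succ * b k = 0
    have hsum : ∃ c, (∑ k : Fin m, N j.succ k.succ * b k) + c = 0 :=
      ⟨N j.succ 0 * a, by rw [add_comm]; exact this⟩
    exact aux_addinv_term (f := fun k : Fin m => N j.succ k.succ * b k) (Finset.mem_univ i) hsum
  -- Equation E1 : b i * N 0 i.succ + ∑ j, C i j * N j.succ i.succ = 1
  have E1 : b i * N 0 i.succ + ∑ j : Fin m, C i j * N j.succ i.succ = 1 := by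
    have := eMN i.succ i.succ
    rw [Fin.sum_univ_succ] at this
    rw [Matrix.one_apply_eq] at this
    rw [hMs0] at this
    simp only [hMss] at this
    exact this
  -- multiply E1 by b i
  have key : b i = b i * (b i * N 0 i.succ) +
      ∑ j : Fin m, b i * (C i j * N j.succ i.succ) := by
    rw [← Finset.mul_sum, ← mul_add, E1, mul_one]
  have main : ∃ c, (b i * (b i * N 0 i.succ) +
      ∑ j : Fin m, b i * (C i j * N j.succ i.succ)) + c = 0 := by
    refine aux_addinv_add ?_ ?_
    · exact aux_addinv_mul (b i) (aux_addinv_mul (b i) hN0)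
    · refine aux_addinv_sum _ _ (fun j _ => ?_)
      have h := aux_addinv_mul (C i j) (E3 j)
      obtain ⟨c, hc⟩ := h
      refine ⟨c, ?_⟩
      have : b i * (C i j * N j.succ i.succ) = C i j * (N j.succ i.succ * b i) := by ring
      rw [this]
      exact hc
  obtain ⟨c, hc⟩ := main
  exact ⟨c, by rw [key]; exact hc⟩
end

section
/- Let S be a commutative semiring, n ≥ 2, a ∈ S, b ∈ S^{n-1}, C ∈ M_{n-1}(S), and M = [[a, bᵀ],[b, C]] ∈ M_n(S). If M is strongly invertible (so that in particular a is invertible and every entry of b is additively invertible), then the Schur complement M/a = C + a⁻¹(-b)bᵀ ∈ M_{n-1}(S) is strongly invertible. -/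
open Matrix

lemma schur_key {S : Type*} [CommSemiring S] {k : ℕ} (a a' : S) (ha : a * a' = 1)
    (b b' : Fin k → S) (hb : ∀ i, b i + b' i = 0)
    (C : Matrix (Fin k) (Fin k) S)
    (h : IsUnit ((Matrix.of (Fin.cons (Fin.cons a b) (fun i => Fin.cons (b i) (C i)))) :
      Matrix (Fin (k+1)) (Fin (k+1)) S)) :
    IsUnit (C + Matrix.of fun i j => a' * b' i * b j) := by
  obtain ⟨N, hN1, hN2⟩ := isUnit_iff_exists.mp h
  rw [isUnit_iff_exists]
  refine ⟨N.submatrix Fin.succ Fin.succ, ?_, ?_⟩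
  · ext i j
    have f1 : b i * N 0 j.succ + ∑ l, C i l * N l.succ j.succ
        = (1 : Matrix (Fin (k+1)) (Fin (k+1)) S) i.succ j.succ := by
      have := congrFun (congrFun hN1 i.succ) j.succ
      simpa [Matrix.mul_apply, Fin.sum_univ_succ] using this
    have f2 : a * N 0 j.succ + ∑ l, b l * N l.succ j.succ = 0 := by
      have := congrFun (congrFun hN1 0) j.succ
      simpa [Matrix.mul_apply, Fin.sum_univ_succ, Matrix.one_apply,
        (Fin.succ_ne_zero j).symm] using this
    have hone : (1 : Matrix (Fin (k+1)) (Fin (k+1)) S) i.succ j.succ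
        = (1 : Matrix (Fin k) (Fin k) S) i j := by
      simp [Matrix.one_apply, Fin.succ_inj]
    set t := N 0 j.succ with ht
    set s := ∑ l, b l * N l.succ j.succ with hs
    have expand : ((C + Matrix.of fun i j => a' * b' i * b j) *
        N.submatrix Fin.succ Fin.succ) i j
        = (∑ l, C i l * N l.succ j.succ) + a' * b' i * s := by
      simp only [Matrix.mul_apply, Matrix.add_apply, Matrix.of_apply,
        Matrix.submatrix_apply, add_mul, Finset.sum_add_distrib, hs, Finset.mul_sum]
      ring_nf
    rw [expand, ← hone]
    have e : (∑ l, C i l * N l.succ j.succ) + a' * b' i * s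
        = (b i * (a * a' * t) + ∑ l, C i l * N l.succ j.succ)
          + a' * b' i * (a * t + s) := by
      calc (∑ l, C i l * N l.succ j.succ) + a' * b' i * s
          = (∑ l, C i l * N l.succ j.succ) + a' * b' i * s
            + (b i + b' i) * (a * a' * t) := by rw [hb i, zero_mul, add_zero]
        _ = _ := by ring
    rw [e, ha, one_mul, f1, f2, mul_zero, add_zero]
  · ext i j
    have g1 : N i.succ 0 * b j + ∑ l, N i.succ l.succ * C l j
        = (1 : Matrix (Fin (k+1)) (Fin (k+1)) S) i.succ j.succ := by
      have := congrFun (congrFun hN2 i.succ) j.succ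
      simpa [Matrix.mul_apply, Fin.sum_univ_succ] using this
    have g2 : N i.succ 0 * a + ∑ l, N i.succ l.succ * b l = 0 := by
      have := congrFun (congrFun hN2 i.succ) 0
      simpa [Matrix.mul_apply, Fin.sum_univ_succ, Matrix.one_apply,
        Fin.succ_ne_zero i] using this
    have hone : (1 : Matrix (Fin (k+1)) (Fin (k+1)) S) i.succ j.succ
        = (1 : Matrix (Fin k) (Fin k) S) i j := by
      simp [Matrix.one_apply, Fin.succ_inj]
    set t := N i.succ 0 with ht
    set s := ∑ l, N i.succ l.succ * b l with hs
    have expand : (N.submatrix Fin.succ Fin.succ *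
        (C + Matrix.of fun i j => a' * b' i * b j)) i j
        = (∑ l, N i.succ l.succ * C l j)
          + ∑ l, N i.succ l.succ * (a' * b' l * b j) := by
      simp only [Matrix.mul_apply, Matrix.add_apply, Matrix.of_apply,
        Matrix.submatrix_apply, mul_add, Finset.sum_add_distrib]
    have hz : (∑ l, N i.succ l.succ * (a' * b' l * b j)) + a' * b j * s = 0 := by
      rw [hs, Finset.mul_sum, ← Finset.sum_add_distrib]
      refine Finset.sum_eq_zero fun l _ => ?_
      calc N i.succ l.succ * (a' * b' l * b j) + a' * b j * (N i.succ l.succ * b l)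
          = N i.succ l.succ * a' * b j * (b l + b' l) := by ring
        _ = 0 := by rw [hb l, mul_zero]
    rw [expand, ← hone]
    have e : (∑ l, N i.succ l.succ * C l j) + ∑ l, N i.succ l.succ * (a' * b' l * b j)
        = (t * (a * a' * b j) + ∑ l, N i.succ l.succ * C l j)
          + ((∑ l, N i.succ l.succ * (a' * b' l * b j)) + a' * b j * s) := by
      calc (∑ l, N i.succ l.succ * C l j) + ∑ l, N i.succ l.succ * (a' * b' l * b j)
          = (∑ l, N i.succ l.succ * C l j) + (∑ l, N i.succ l.succ * (a' * b' l * b j))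
            + (t * a + s) * (a' * b j) := by rw [g2, zero_mul, add_zero]
        _ = _ := by ring
    rw [e, ha, one_mul, g1, hz, add_zero]

/-- If `M = [[a, bᵀ],[b, C]] ∈ M_n(S)` (with `n = m + 1 ≥ 2`) is strongly
invertible (so that `a` is invertible, with inverse `a'`, and every entry of `b` is
additively invertible, with additive inverses `b'`), then the Schur complement
`M/a = C + a⁻¹(-b)bᵀ` is strongly invertible. -/
theorem stmt_5 {S : Type*} [CommSemiring S] (m : ℕ) (hm : 1 ≤ m)
    (a a' : S) (ha : a * a' = 1)
    (b b' : Fin m → S) (hb : ∀ i, b i + b' i = 0)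
    (C : Matrix (Fin m) (Fin m) S)
    (M : Matrix (Fin (m + 1)) (Fin (m + 1)) S)
    (hM : M = Matrix.of (Fin.cons (Fin.cons a b) (fun i => Fin.cons (b i) (C i))))
    (hsi : StronglyInvertible M) :
    StronglyInvertible (C + Matrix.of fun i j => a' * b' i * b j) := by
  intro k hk hk0
  have hk1 : k + 1 ≤ m + 1 := Nat.succ_le_succ hk
  have hsub := hsi (k + 1) hk1 (Nat.succ_pos k)
  have hEq : M.submatrix (Fin.castLE hk1) (Fin.castLE hk1)
      = Matrix.of (Fin.cons (Fin.cons a (fun i => b (Fin.castLE hk i)))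
          (fun i => Fin.cons (b (Fin.castLE hk i))
            ((Matrix.of fun i j => C (Fin.castLE hk i) (Fin.castLE hk j)) i))) := by
    subst hM
    ext i j
    refine Fin.cases ?_ (fun i => ?_) i <;> refine Fin.cases ?_ (fun j => ?_) j <;>
      simp [Fin.castLE_succ]
  rw [hEq] at hsub
  have key := schur_key a a' ha (fun i => b (Fin.castLE hk i)) (fun i => b' (Fin.castLE hk i))
      (fun i => hb _) (Matrix.of fun i j => C (Fin.castLE hk i) (Fin.castLE hk j)) hsub
  have heq2 : (C + Matrix.of fun i j => a' * b' i * b j).submatrix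
      (Fin.castLE hk) (Fin.castLE hk)
      = (Matrix.of fun i j => C (Fin.castLE hk i) (Fin.castLE hk j))
        + Matrix.of fun i j => a' * b' (Fin.castLE hk i) * b (Fin.castLE hk j) := by
    ext i j; simp
  rw [heq2]
  exact key
end

section
/- Let S be a commutative semiring and let M ∈ M_n(S) be a symmetric strongly invertible matrix with a nonnegative numerical range. Then there exists a strongly invertible lower triangular matrix L ∈ M_n(S) such that M = LLᵀ. -/
open Matrix

section helpers

variable {S : Type*} [CommSemiring S]

private lemma key_unit {t d β γ : S} (h1 : β + d * t = 1) (h2 : β + γ * t = 0) :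
    IsUnit t := by
  refine IsUnit.of_mul_eq_one (a := t) (d ^ 2 * t + 2 * d * β + γ ^ 2 * t) ?_
  have hb : β * (β + γ * t) = 0 := by rw [h2, mul_zero]
  calc t * (d ^ 2 * t + 2 * d * β + γ ^ 2 * t)
      = t * (d ^ 2 * t + 2 * d * β + γ ^ 2 * t) + β * (β + γ * t) := by
        rw [hb, add_zero]
    _ = (β + d * t) ^ 2 + (γ * t) * (β + γ * t) := by ring
    _ = 1 := by rw [h1, h2, mul_zero, one_pow, add_zero]

private lemma si_isUnit {n : ℕ} {M : Matrix (Fin n) (Fin n) S}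
    (h : StronglyInvertible M) : IsUnit M := by
  rcases Nat.eq_zero_or_pos n with hn | hn
  · subst hn
    exact ⟨⟨M, 1, Subsingleton.elim _ _, Subsingleton.elim _ _⟩, rfl⟩
  · have h' := h n le_rfl hn
    have he : M.submatrix (Fin.castLE (le_refl n)) (Fin.castLE (le_refl n)) = M := by
      ext i j; rfl
    rwa [he] at h'

end helpers

/-- Cholesky decomposition: every symmetric strongly invertible matrix
with a nonnegative numerical range over a commutative semiring can be written as
`M = LLᵀ` for a strongly invertible lower triangular matrix `L`. -/
theorem stmt_6 {S : Type*} [CommSemiring S] {n : ℕ}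
    (M : Matrix (Fin n) (Fin n) S)
    (hsymm : Mᵀ = M)
    (hsi : StronglyInvertible M)
    (hnnr : ∀ x : Fin n → S, ∃ c : S, x ⬝ᵥ M.mulVec x = c ^ 2) :
    ∃ L : Matrix (Fin n) (Fin n) S,
      StronglyInvertible L ∧ (∀ i j : Fin n, i < j → L i j = 0) ∧ M = L * Lᵀ := by
  induction n with
  | zero =>
      exact ⟨M, fun k hk h0 => absurd h0 (by omega), fun i _ _ => i.elim0,
        Subsingleton.elim _ _⟩
  | succ n ih =>
      have hMs : ∀ i j, M j i = M i j := fun i j => congrFun (congrFun hsymm i) j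
      obtain ⟨uM, huM⟩ := si_isUnit hsi
      set N : Matrix (Fin (n+1)) (Fin (n+1)) S := (uM⁻¹).val with hNdef
      have hMN : M * N = 1 := by rw [← huM]; exact uM.mul_inv
      have hNM : N * M = 1 := by rw [← huM]; exact uM.inv_mul
      set A : Matrix (Fin n) (Fin n) S := M.submatrix Fin.castSucc Fin.castSucc with hAdef
      have hAsymm : Aᵀ = A := by ext i j; exact hMs _ _
      have hAsi : StronglyInvertible A := by
        intro k hk h0
        have hk' : k ≤ n + 1 := le_trans hk (Nat.le_succ n)
        have h' := hsi k hk' h0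
        have heq : A.submatrix (Fin.castLE hk) (Fin.castLE hk)
            = M.submatrix (Fin.castLE hk') (Fin.castLE hk') := by
          ext i j; rfl
        rwa [heq]
      have hAnnr : ∀ y : Fin n → S, ∃ c : S, y ⬝ᵥ A.mulVec y = c ^ 2 := by
        intro y
        obtain ⟨c, hc⟩ := hnnr (Fin.snoc y 0)
        refine ⟨c, ?_⟩
        rw [← hc]
        simp [dotProduct, mulVec, Fin.sum_univ_castSucc, hAdef]
      obtain ⟨L₁, hL₁si, hL₁low, hL₁eq⟩ := ih A hAsymm hAsi hAnnr
      obtain ⟨uL, huL⟩ := si_isUnit hL₁si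
      set K₁ : Matrix (Fin n) (Fin n) S := (uL⁻¹).val with hK₁def
      have hLK : L₁ * K₁ = 1 := by rw [← huL]; exact uL.mul_inv
      have hKL : K₁ * L₁ = 1 := by rw [← huL]; exact uL.inv_mul
      set b : Fin n → S := fun i => M i.castSucc (Fin.last n) with hbdef
      set d : S := M (Fin.last n) (Fin.last n) with hddef
      set q : Fin n → S := fun i => N i.castSucc (Fin.last n) with hqdef
      set t : S := N (Fin.last n) (Fin.last n) with htdef
      -- scalar relation 1 : b ⬝ᵥ q + d * t = 1
      have h1 : b ⬝ᵥ q + d * t = 1 := by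
        have h := congrFun (congrFun hMN (Fin.last n)) (Fin.last n)
        rw [Matrix.mul_apply, Fin.sum_univ_castSucc, Matrix.one_apply_eq] at h
        rw [← h]
        congr 1
        refine Finset.sum_congr rfl fun i _ => ?_
        rw [hMs (Fin.castSucc i) (Fin.last n)]
      -- block relation : A *ᵥ q + t • b = 0
      have hAq : A *ᵥ q + t • b = 0 := by
        funext i
        have h := congrFun (congrFun hMN i.castSucc) (Fin.last n)
        rw [Matrix.mul_apply, Fin.sum_univ_castSucc,
          Matrix.one_apply_ne (Fin.castSucc_lt_last i).ne] at h
        simpa [mulVec, dotProduct, hAdef, mul_comm] using h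
      -- the inverse of A
      have hAA' : A * (K₁ᵀ * K₁) = 1 := by
        have hT : L₁ᵀ * K₁ᵀ = 1 := by rw [← Matrix.transpose_mul, hKL, Matrix.transpose_one]
        calc A * (K₁ᵀ * K₁) = L₁ * (L₁ᵀ * K₁ᵀ) * K₁ := by
              rw [hL₁eq]; simp only [Matrix.mul_assoc]
          _ = 1 := by rw [hT, Matrix.mul_one, hLK]
      have hA'A : (K₁ᵀ * K₁) * A = 1 := by
        have hT : K₁ᵀ * L₁ᵀ = 1 := by rw [← Matrix.transpose_mul, hLK, Matrix.transpose_one]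
        calc (K₁ᵀ * K₁) * A = K₁ᵀ * (K₁ * L₁) * L₁ᵀ := by
              rw [hL₁eq]; simp only [Matrix.mul_assoc]
          _ = 1 := by rw [hKL, Matrix.mul_one, hT]
      set γ : S := b ⬝ᵥ ((K₁ᵀ * K₁) *ᵥ b) with hγdef
      have hq0 : q + t • ((K₁ᵀ * K₁) *ᵥ b) = 0 := by
        have h := congrArg (fun w => (K₁ᵀ * K₁) *ᵥ w) hAq
        simpa [Matrix.mulVec_add, Matrix.mulVec_smul, Matrix.mulVec_mulVec, hA'A] using h
      have h2 : b ⬝ᵥ q + γ * t = 0 := by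
        have h := congrArg (fun w => b ⬝ᵥ w) hq0
        simpa [dotProduct_add, dotProduct_smul, smul_eq_mul, mul_comm, hγdef] using h
      have htu : IsUnit t := key_unit h1 h2
      -- t is a square
      set x : Fin (n+1) → S := fun j => N j (Fin.last n) with hxdef
      obtain ⟨c, hc⟩ := hnnr x
      have hct : c ^ 2 = t := by
        rw [← hc]
        have hMx : M.mulVec x = fun i => (1 : Matrix (Fin (n+1)) (Fin (n+1)) S) i (Fin.last n) := by
          funext i
          rw [← hMN]
          simp [mulVec, dotProduct, Matrix.mul_apply, hxdef]
        rw [hMx]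
        simp [dotProduct, Matrix.one_apply, hxdef, htdef]
      have hcu : IsUnit c := by
        have h : IsUnit (c * c) := by rw [← pow_two, hct]; exact htu
        exact isUnit_of_mul_isUnit_left h
      obtain ⟨uc, huc⟩ := hcu
      set r : S := (uc⁻¹).val with hrdef
      have hrc : r * c = 1 := by rw [← huc]; exact uc.inv_mul
      have hr2t : r ^ 2 * t = 1 := by
        rw [← hct]
        calc r ^ 2 * c ^ 2 = (r * c) ^ 2 := by ring
          _ = 1 := by rw [hrc, one_pow]
      have hrt : r * t = c := by
        rw [← hct]
        calc r * c ^ 2 = (r * c) * c := by ring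
          _ = c := by rw [hrc, one_mul]
      have hdt : d * t = 1 + γ * t := by
        calc d * t = (b ⬝ᵥ q + γ * t) + d * t := by rw [h2, zero_add]
          _ = (b ⬝ᵥ q + d * t) + γ * t := by ring
          _ = 1 + γ * t := by rw [h1]
      have hd : d = γ + r ^ 2 := by
        calc d = d * t * r ^ 2 := by rw [mul_assoc, mul_comm t, hr2t, mul_one]
          _ = (1 + γ * t) * r ^ 2 := by rw [hdt]
          _ = r ^ 2 + γ * (r ^ 2 * t) := by ring
          _ = γ + r ^ 2 := by rw [hr2t, mul_one, add_comm]
      set v : Fin n → S := K₁ *ᵥ b with hvdef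
      have hLv : L₁ *ᵥ v = b := by
        rw [hvdef, Matrix.mulVec_mulVec, hLK, Matrix.one_mulVec]
      have hγv : γ = v ⬝ᵥ v := by
        rw [hγdef, ← Matrix.mulVec_mulVec, Matrix.dotProduct_mulVec, Matrix.vecMul_transpose,
          hvdef]
      have hq2 : L₁ᵀ *ᵥ q + t • v = 0 := by
        have h : L₁ *ᵥ (L₁ᵀ *ᵥ q + t • v) = L₁ *ᵥ 0 := by
          rw [Matrix.mulVec_add, Matrix.mulVec_smul, Matrix.mulVec_mulVec, ← hL₁eq, hLv,
            Matrix.mulVec_zero]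
          exact hAq
        have h' := congrArg (fun w => K₁ *ᵥ w) h
        simpa [Matrix.mulVec_mulVec, hKL] using h'
      have hq3 : q + t • (K₁ᵀ *ᵥ v) = 0 := by
        rw [hvdef, Matrix.mulVec_mulVec]
        exact hq0
      -- assembling the blocks
      set e : (Fin n ⊕ Fin 1) ≃ Fin (n+1) := finSumFinEquiv with hedef
      have hesl : ∀ a : Fin n, e.symm a.castSucc = Sum.inl a := fun a =>
        finSumFinEquiv_symm_apply_castAdd a
      have hlastnat : Fin.last n = Fin.natAdd n (0 : Fin 1) := by
        ext; simp
      have hesr : e.symm (Fin.last n) = Sum.inr 0 := by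
        rw [hlastnat]; exact finSumFinEquiv_symm_apply_natAdd 0
      set Lb : Matrix (Fin n ⊕ Fin 1) (Fin n ⊕ Fin 1) S :=
        Matrix.fromBlocks L₁ 0 (Matrix.of fun _ j => v j) (Matrix.of fun _ _ => r) with hLbdef
      set Kb : Matrix (Fin n ⊕ Fin 1) (Fin n ⊕ Fin 1) S :=
        Matrix.fromBlocks K₁ 0 (Matrix.of fun _ j => r * q j) (Matrix.of fun _ _ => c) with hKbdef
      set L : Matrix (Fin (n+1)) (Fin (n+1)) S := Lb.submatrix e.symm e.symm with hLdef
      -- the product of the blocks is M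
      have hLbmul : Lb * Lbᵀ = Matrix.fromBlocks A (Matrix.of fun i _ => b i)
          (Matrix.of fun _ j => b j) (Matrix.of fun _ _ => d) := by
        ext i j
        rcases i with i | i <;> rcases j with j | j
        · simp only [Matrix.mul_apply, Fintype.sum_sum_type, hLbdef, Matrix.transpose_apply,
            Matrix.fromBlocks_apply₁₁, Matrix.fromBlocks_apply₁₂, Matrix.fromBlocks_apply₂₁,
            Matrix.fromBlocks_apply₂₂, Matrix.of_apply, Matrix.zero_apply, mul_zero, zero_mul,
            Finset.sum_const_zero, add_zero, zero_add]
          rw [congrFun (congrFun hL₁eq i) j, Matrix.mul_apply]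
          exact Finset.sum_congr rfl fun k _ => rfl
        · simp only [Matrix.mul_apply, Fintype.sum_sum_type, hLbdef, Matrix.transpose_apply,
            Matrix.fromBlocks_apply₁₁, Matrix.fromBlocks_apply₁₂, Matrix.fromBlocks_apply₂₁,
            Matrix.fromBlocks_apply₂₂, Matrix.of_apply, Matrix.zero_apply, mul_zero, zero_mul,
            Finset.sum_const_zero, add_zero, zero_add]
          simpa [mulVec, dotProduct] using congrFun hLv i
        · simp only [Matrix.mul_apply, Fintype.sum_sum_type, hLbdef, Matrix.transpose_apply,
            Matrix.fromBlocks_apply₁₁, Matrix.fromBlocks_apply₁₂, Matrix.fromBlocks_apply₂₁,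
            Matrix.fromBlocks_apply₂₂, Matrix.of_apply, Matrix.zero_apply, mul_zero, zero_mul,
            Finset.sum_const_zero, add_zero, zero_add]
          have h := congrFun hLv j
          simp only [mulVec, dotProduct] at h
          rw [← h]
          exact Finset.sum_congr rfl fun k _ => mul_comm _ _
        · simp only [Matrix.mul_apply, Fintype.sum_sum_type, hLbdef, Matrix.transpose_apply,
            Matrix.fromBlocks_apply₁₁, Matrix.fromBlocks_apply₁₂, Matrix.fromBlocks_apply₂₁,
            Matrix.fromBlocks_apply₂₂, Matrix.of_apply, Matrix.zero_apply, mul_zero, zero_mul,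
            Finset.sum_const_zero, add_zero, zero_add, Fin.sum_univ_one]
          rw [hd, hγv]
          simp [dotProduct, pow_two]
      have hMsub : M.submatrix ⇑e ⇑e = Matrix.fromBlocks A (Matrix.of fun i _ => b i)
          (Matrix.of fun _ j => b j) (Matrix.of fun _ _ => d) := by
        ext i j
        rcases i with i | i <;> rcases j with j | j
        · rfl
        · have hj : (0 : Fin 1) = j := Subsingleton.elim _ _
          subst hj
          show M _ (e (Sum.inr 0)) = b i
          rw [show e (Sum.inr (0 : Fin 1)) = Fin.last n from hlastnat ▸ rfl]
          rfl
        · have hi : (0 : Fin 1) = i := Subsingleton.elim _ _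
          subst hi
          show M (e (Sum.inr 0)) _ = b j
          rw [show e (Sum.inr (0 : Fin 1)) = Fin.last n from hlastnat ▸ rfl]
          exact hMs _ _
        · have hi : (0 : Fin 1) = i := Subsingleton.elim _ _
          have hj : (0 : Fin 1) = j := Subsingleton.elim _ _
          subst hi; subst hj
          show M (e (Sum.inr 0)) (e (Sum.inr 0)) = d
          rw [show e (Sum.inr (0 : Fin 1)) = Fin.last n from hlastnat ▸ rfl]
      have hMeq : M = L * Lᵀ := by
        have h : L * Lᵀ = (Lb * Lbᵀ).submatrix ⇑e.symm ⇑e.symm := by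
          rw [hLdef, Matrix.transpose_submatrix, Matrix.submatrix_mul_equiv]
        rw [h, hLbmul, ← hMsub, Matrix.submatrix_submatrix, Equiv.self_comp_symm,
          Matrix.submatrix_id_id]
      -- L is invertible, with explicit inverse Kb
      have hLbKb : Lb * Kb = 1 := by
        ext i j
        rcases i with i | i <;> rcases j with j | j
        · simp only [Matrix.mul_apply, Fintype.sum_sum_type, hLbdef, hKbdef,
            Matrix.fromBlocks_apply₁₁, Matrix.fromBlocks_apply₁₂, Matrix.fromBlocks_apply₂₁,
            Matrix.fromBlocks_apply₂₂, Matrix.of_apply, Matrix.zero_apply, mul_zero, zero_mul,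
            Finset.sum_const_zero, add_zero, zero_add, Matrix.one_apply, Sum.inl.injEq]
          have h := congrFun (congrFun hLK i) j
          simp only [Matrix.mul_apply, Matrix.one_apply] at h
          simpa using h
        · simp [hLbdef, hKbdef, Matrix.mul_apply, Fintype.sum_sum_type, Matrix.one_apply]
        · simp only [Matrix.mul_apply, Fintype.sum_sum_type, hLbdef, hKbdef,
            Matrix.fromBlocks_apply₁₁, Matrix.fromBlocks_apply₁₂, Matrix.fromBlocks_apply₂₁,
            Matrix.fromBlocks_apply₂₂, Matrix.of_apply, Matrix.zero_apply, mul_zero, zero_mul,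
            Finset.sum_const_zero, add_zero, zero_add, Fin.sum_univ_one, Matrix.one_apply]
          have h := congrFun hq3 j
          simp only [Pi.add_apply, Pi.smul_apply, smul_eq_mul, Pi.zero_apply] at h
          have h' := congrArg (fun z => r ^ 2 * z) h
          simp only [mul_zero, mul_add] at h'
          rw [if_neg (by simp)]
          have hsum : (∑ k, v k * K₁ k j) = (K₁ᵀ *ᵥ v) j := by
            simp only [mulVec, dotProduct, Matrix.transpose_apply]
            exact Finset.sum_congr rfl fun k _ => mul_comm _ _
          calc (∑ k, v k * K₁ k j) + r * (r * q j)
              = r ^ 2 * q j + (K₁ᵀ *ᵥ v) j := by rw [hsum]; ring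
          _ = r ^ 2 * q j + r ^ 2 * (t * (K₁ᵀ *ᵥ v) j) := by
                rw [show r ^ 2 * (t * (K₁ᵀ *ᵥ v) j) = (r ^ 2 * t) * (K₁ᵀ *ᵥ v) j from by ring,
                  hr2t, one_mul]
          _ = 0 := h'
        · simp only [Matrix.mul_apply, Fintype.sum_sum_type, hLbdef, hKbdef,
            Matrix.fromBlocks_apply₁₁, Matrix.fromBlocks_apply₁₂, Matrix.fromBlocks_apply₂₁,
            Matrix.fromBlocks_apply₂₂, Matrix.of_apply, Matrix.zero_apply, mul_zero, zero_mul,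
            Finset.sum_const_zero, add_zero, zero_add, Fin.sum_univ_one, Matrix.one_apply]
          rw [Subsingleton.elim i j, if_pos rfl]
          exact hrc
      have hKbLb : Kb * Lb = 1 := by
        ext i j
        rcases i with i | i <;> rcases j with j | j
        · simp only [Matrix.mul_apply, Fintype.sum_sum_type, hLbdef, hKbdef,
            Matrix.fromBlocks_apply₁₁, Matrix.fromBlocks_apply₁₂, Matrix.fromBlocks_apply₂₁,
            Matrix.fromBlocks_apply₂₂, Matrix.of_apply, Matrix.zero_apply, mul_zero, zero_mul,
            Finset.sum_const_zero, add_zero, zero_add, Matrix.one_apply, Sum.inl.injEq]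
          have h := congrFun (congrFun hKL i) j
          simp only [Matrix.mul_apply, Matrix.one_apply] at h
          simpa using h
        · simp [hLbdef, hKbdef, Matrix.mul_apply, Fintype.sum_sum_type, Matrix.one_apply]
        · simp only [Matrix.mul_apply, Fintype.sum_sum_type, hLbdef, hKbdef,
            Matrix.fromBlocks_apply₁₁, Matrix.fromBlocks_apply₁₂, Matrix.fromBlocks_apply₂₁,
            Matrix.fromBlocks_apply₂₂, Matrix.of_apply, Matrix.zero_apply, mul_zero, zero_mul,
            Finset.sum_const_zero, add_zero, zero_add, Fin.sum_univ_one, Matrix.one_apply]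
          have h := congrFun hq2 j
          simp only [Pi.add_apply, Pi.smul_apply, smul_eq_mul, Pi.zero_apply] at h
          have h' := congrArg (fun z => r * z) h
          simp only [mul_zero, mul_add] at h'
          rw [if_neg (by simp)]
          have hsum : (∑ k, r * q k * L₁ k j) = r * (L₁ᵀ *ᵥ q) j := by
            simp only [mulVec, dotProduct, Matrix.transpose_apply, Finset.mul_sum]
            exact Finset.sum_congr rfl fun k _ => by ring
          calc (∑ k, r * q k * L₁ k j) + c * v j
              = r * (L₁ᵀ *ᵥ q) j + r * (t * v j) := by
                rw [show r * (t * v j) = (r * t) * v j from by ring, hrt, hsum]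
          _ = 0 := h'
        · simp only [Matrix.mul_apply, Fintype.sum_sum_type, hLbdef, hKbdef,
            Matrix.fromBlocks_apply₁₁, Matrix.fromBlocks_apply₁₂, Matrix.fromBlocks_apply₂₁,
            Matrix.fromBlocks_apply₂₂, Matrix.of_apply, Matrix.zero_apply, mul_zero, zero_mul,
            Finset.sum_const_zero, add_zero, zero_add, Fin.sum_univ_one, Matrix.one_apply]
          rw [Subsingleton.elim i j, if_pos rfl, mul_comm]
          exact hrc
      have hLKb : L * Kb.submatrix ⇑e.symm ⇑e.symm = 1 := by
        rw [hLdef, Matrix.submatrix_mul_equiv, hLbKb, Matrix.submatrix_one_equiv]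
      have hKbL : Kb.submatrix ⇑e.symm ⇑e.symm * L = 1 := by
        rw [hLdef, Matrix.submatrix_mul_equiv, hKbLb, Matrix.submatrix_one_equiv]
      have hLu : IsUnit L := ⟨⟨L, Kb.submatrix ⇑e.symm ⇑e.symm, hLKb, hKbL⟩, rfl⟩
      -- L is strongly invertible
      have hLsi : StronglyInvertible L := by
        intro k hk h0
        rcases eq_or_lt_of_le hk with hkeq | hklt
        · subst hkeq
          have he : L.submatrix (Fin.castLE hk) (Fin.castLE hk) = L := by
            ext i j; rfl
          rwa [he]
        · have hk' : k ≤ n := by omega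
          have heq : L.submatrix (Fin.castLE hk) (Fin.castLE hk)
              = L₁.submatrix (Fin.castLE hk') (Fin.castLE hk') := by
            ext i j
            show Lb (e.symm (Fin.castLE hk i)) (e.symm (Fin.castLE hk j)) = _
            have hi : Fin.castLE hk i = Fin.castSucc (Fin.castLE hk' i) := rfl
            have hj : Fin.castLE hk j = Fin.castSucc (Fin.castLE hk' j) := rfl
            rw [hi, hj, hesl, hesl]
            rfl
          rw [heq]
          exact hL₁si k hk' h0
      -- L is lower triangular
      have hLlow : ∀ i j : Fin (n+1), i < j → L i j = 0 := by
        intro i j hij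
        rcases Fin.eq_castSucc_or_eq_last i with ⟨i', rfl⟩ | rfl
        · rcases Fin.eq_castSucc_or_eq_last j with ⟨j', rfl⟩ | rfl
          · show Lb (e.symm _) (e.symm _) = 0
            rw [hesl, hesl]
            exact hL₁low i' j' (Fin.castSucc_lt_castSucc_iff.mp hij)
          · show Lb (e.symm _) (e.symm _) = 0
            rw [hesl, hesr]
            rfl
        · exact absurd (lt_of_lt_of_le hij (Fin.le_last j)) (lt_irrefl _)
      exact ⟨L, hLsi, hLlow, hMeq⟩
end

section
/- Let S be a commutative semiring and let M ∈ M_n(S). If M = LLᵀ = L̃L̃ᵀ where L, L̃ ∈ M_n(S) are invertible lower triangular matrices, then there exists a diagonal matrix D ∈ M_n(S) with D² = I such that L̃ = LD. -/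
open Matrix

/-- Over a commutative semiring, a right inverse of an invertible lower-triangular
matrix is lower triangular. -/
lemma aux_inv_lower_tri {S : Type*} [CommSemiring S] {n : ℕ}
    (L B : Matrix (Fin n) (Fin n) S) (h : L * B = 1)
    (htri : ∀ i j : Fin n, i < j → L i j = 0) :
    ∀ i j : Fin n, i < j → B i j = 0 := by
  have key : ∀ m : ℕ, ∀ i : Fin n, i.val = m →
      (L i i * B i i = 1 ∧ ∀ j, i < j → B i j = 0) := by
    intro m
    induction m using Nat.strong_induction_on with
    | _ m ih =>
      intro i hi
      have hrow : ∀ j, i ≤ j → L i i * B i j = (1 : Matrix (Fin n) (Fin n) S) i j := by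
        intro j hj
        rw [← h, Matrix.mul_apply]
        rw [Finset.sum_eq_single i]
        · intro k _ hk
          rcases lt_or_gt_of_ne hk with hk' | hk'
          · have hkj : k < j := lt_of_lt_of_le hk' hj
            have : B k j = 0 := (ih k.val (by omega) k rfl).2 j hkj
            simp [this]
          · simp [htri i k hk']
        · simp
      have h1 : L i i * B i i = 1 := by
        have := hrow i le_rfl; simpa [Matrix.one_apply] using this
      refine ⟨h1, fun j hij => ?_⟩
      have h2 : L i i * B i j = 0 := by
        have := hrow j hij.le
        simpa [Matrix.one_apply, (Fin.ne_of_lt hij)] using this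
      calc B i j = (L i i * B i i) * B i j := by rw [h1, one_mul]
        _ = B i i * (L i i * B i j) := by ring
        _ = 0 := by rw [h2, mul_zero]
  intro i j hij
  exact (key i.val i rfl).2 j hij

/-- if `M = LLᵀ = L̃L̃ᵀ` for invertible lower triangular matrices `L, L̃`,
then there is a diagonal matrix `D` with `D² = I` such that `L̃ = LD`. -/
theorem stmt_7 {S : Type*} [CommSemiring S] {n : ℕ}
    (M L Lt : Matrix (Fin n) (Fin n) S)
    (hL : IsUnit L) (hLt : IsUnit Lt)
    (hLtri : ∀ i j : Fin n, i < j → L i j = 0)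
    (hLttri : ∀ i j : Fin n, i < j → Lt i j = 0)
    (hML : M = L * Lᵀ) (hMLt : M = Lt * Ltᵀ) :
    ∃ D : Matrix (Fin n) (Fin n) S,
      (∀ i j : Fin n, i ≠ j → D i j = 0) ∧ D * D = 1 ∧ Lt = L * D := by
  obtain ⟨u, hu⟩ := hL
  set B : Matrix (Fin n) (Fin n) S := (Units.val u⁻¹) with hB
  have hLB : L * B = 1 := by rw [← hu, hB]; exact u.mul_inv
  have hBL : B * L = 1 := by rw [← hu, hB]; exact u.inv_mul
  have hBtri : ∀ i j : Fin n, i < j → B i j = 0 :=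
    aux_inv_lower_tri L B hLB hLtri
  set D : Matrix (Fin n) (Fin n) S := B * Lt with hD
  have hLD : L * D = Lt := by rw [hD, ← mul_assoc, hLB, one_mul]
  -- D is lower triangular
  have hDtri : ∀ i j : Fin n, i < j → D i j = 0 := by
    intro i j hij
    rw [hD, Matrix.mul_apply]
    apply Finset.sum_eq_zero
    intro k _
    rcases lt_or_ge k j with hk | hk
    · rw [hLttri k j hk, mul_zero]
    · rw [hBtri i k (lt_of_lt_of_le hij hk), zero_mul]
  -- D * Dᵀ = 1
  have e1 : L * Lᵀ = Lt * Ltᵀ := by rw [← hML, ← hMLt]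
  have hDDt : D * Dᵀ = 1 := by
    have e2 : B * (L * Lᵀ) * Bᵀ = B * (Lt * Ltᵀ) * Bᵀ := by rw [e1]
    have left : B * (L * Lᵀ) * Bᵀ = 1 := by
      rw [← mul_assoc, hBL, one_mul, ← transpose_mul, hBL, transpose_one]
    have right : B * (Lt * Ltᵀ) * Bᵀ = D * Dᵀ := by
      rw [← hLD, transpose_mul, hD]
      rw [show B * (L * (B * Lt) * (Dᵀ * Lᵀ)) * Bᵀ
            = (B * L) * ((B * Lt) * Dᵀ) * (Lᵀ * Bᵀ) by
        simp only [mul_assoc]]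
      rw [hBL, one_mul, ← transpose_mul, hBL, transpose_one, mul_one, hD]
    rw [← right, ← e2, left]
  -- Dᵀ is lower triangular, so D is upper triangular too
  have hDttri : ∀ i j : Fin n, i < j → Dᵀ i j = 0 :=
    aux_inv_lower_tri D Dᵀ hDDt hDtri
  have hdiag : ∀ i j : Fin n, i ≠ j → D i j = 0 := by
    intro i j hij
    rcases lt_or_gt_of_ne hij with h' | h'
    · exact hDtri i j h'
    · exact hDttri j i h'
  have hDt_eq : Dᵀ = D := by
    ext i j
    rcases eq_or_ne i j with rfl | hij
    · simp [Matrix.transpose_apply]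
    · rw [Matrix.transpose_apply, hdiag i j hij, hdiag j i (Ne.symm hij)]
  refine ⟨D, hdiag, ?_, hLD.symm⟩
  calc D * D = D * Dᵀ := by rw [hDt_eq]
    _ = 1 := hDDt
end

section
/- Let S be a commutative semiring and let L, L̃ ∈ M_n(S) be invertible lower triangular matrices with LLᵀ = L̃L̃ᵀ. Then the matrix D = L⁻¹L̃ is a diagonal matrix and satisfies D² = I. -/
open Matrix

/-- Over a commutative semiring, a right inverse of a lower triangular matrix
is lower triangular (and the diagonal entries multiply to 1). -/
lemma tri_inv_aux {S : Type*} [CommSemiring S] {n : ℕ}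
    (L M : Matrix (Fin n) (Fin n) S)
    (hL : ∀ i j : Fin n, i < j → L i j = 0)
    (h : L * M = 1) :
    ∀ i : Fin n, (L i i * M i i = 1) ∧ (∀ j : Fin n, i < j → M i j = 0) := by
  have key : ∀ m : ℕ, ∀ i : Fin n, i.val = m →
      (L i i * M i i = 1) ∧ (∀ j : Fin n, i < j → M i j = 0) := by
    intro m
    induction m using Nat.strong_induction_on with
    | _ m ih =>
      intro i him
      have IH : ∀ k : Fin n, k < i →
          (L k k * M k k = 1) ∧ (∀ j : Fin n, k < j → M k j = 0) := by
        intro k hk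
        exact ih k.val (him ▸ hk) k rfl
      have hsum : ∀ j : Fin n, i ≤ j → (L * M) i j = L i i * M i j := by
        intro j hij
        rw [Matrix.mul_apply]
        apply Finset.sum_eq_single i
        · intro k _ hk
          rcases lt_or_gt_of_ne hk with hlt | hgt
          · rw [(IH k hlt).2 j (lt_of_lt_of_le hlt hij), mul_zero]
          · rw [hL i k hgt, zero_mul]
        · intro hc; exact absurd (Finset.mem_univ i) hc
      have hdiag : L i i * M i i = 1 := by
        have := hsum i le_rfl
        rw [h, Matrix.one_apply_eq] at this
        exact this.symm
      refine ⟨hdiag, fun j hij => ?_⟩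
      have h0 : L i i * M i j = 0 := by
        have := hsum j (le_of_lt hij)
        rw [h, Matrix.one_apply_ne (ne_of_lt hij)] at this
        exact this.symm
      calc M i j = (L i i * M i i) * M i j := by rw [hdiag, one_mul]
        _ = M i i * (L i i * M i j) := by ring
        _ = 0 := by rw [h0, mul_zero]
  exact fun i => key i.val i rfl

/-- if `L, L̃` are invertible lower triangular matrices with `LLᵀ = L̃L̃ᵀ`,
then `D = L⁻¹L̃` is diagonal and `D² = I`.  Here `Li` denotes the inverse of `L`
(the matrix `B` with `LB = BL = I`). -/
theorem stmt_8 {S : Type*} [CommSemiring S] {n : ℕ}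
    (L Li Lt : Matrix (Fin n) (Fin n) S)
    (hLi : L * Li = 1 ∧ Li * L = 1)
    (hLt : IsUnit Lt)
    (hLtri : ∀ i j : Fin n, i < j → L i j = 0)
    (hLttri : ∀ i j : Fin n, i < j → Lt i j = 0)
    (h : L * Lᵀ = Lt * Ltᵀ) :
    (∀ i j : Fin n, i ≠ j → (Li * Lt) i j = 0) ∧ (Li * Lt) * (Li * Lt) = 1 := by
  obtain ⟨u, hu⟩ := hLt
  set Lti := (u⁻¹).val with hLti
  have hu1 : Lt * Lti = 1 := by rw [← hu]; exact u.mul_inv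
  have hu2 : Lti * Lt = 1 := by rw [← hu]; exact u.inv_mul
  -- Li is lower triangular
  have hLiTri : ∀ i j : Fin n, i < j → Li i j = 0 :=
    fun i j hij => (tri_inv_aux L Li hLtri hLi.1 i).2 j hij
  -- Lti is lower triangular
  have hLtiTri : ∀ i j : Fin n, i < j → Lti i j = 0 :=
    fun i j hij => (tri_inv_aux Lt Lti hLttri hu1 i).2 j hij
  -- D = (Lti * L)ᵀ
  have hD : Li * Lt = (Lti * L)ᵀ := by
    calc Li * Lt = Li * Lt * (Ltᵀ * Ltiᵀ) := by
          rw [← Matrix.transpose_mul, hu2, Matrix.transpose_one, mul_one]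
      _ = Li * (Lt * Ltᵀ) * Ltiᵀ := by simp only [mul_assoc]
      _ = Li * (L * Lᵀ) * Ltiᵀ := by rw [h]
      _ = (Li * L) * Lᵀ * Ltiᵀ := by simp only [mul_assoc]
      _ = Lᵀ * Ltiᵀ := by rw [hLi.2, one_mul]
      _ = (Lti * L)ᵀ := by rw [Matrix.transpose_mul]
  -- diagonality
  have hdiag : ∀ i j : Fin n, i ≠ j → (Li * Lt) i j = 0 := by
    intro i j hij
    rcases lt_or_gt_of_ne hij with hlt | hgt
    · -- i < j : Li * Lt lower triangular
      rw [Matrix.mul_apply]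
      apply Finset.sum_eq_zero
      intro k _
      rcases lt_or_ge i k with hik | hki
      · rw [hLiTri i k hik, zero_mul]
      · rw [hLttri k j (lt_of_le_of_lt hki hlt), mul_zero]
    · -- j < i : use D = (Lti * L)ᵀ
      rw [hD, Matrix.transpose_apply, Matrix.mul_apply]
      apply Finset.sum_eq_zero
      intro k _
      rcases lt_or_ge j k with hjk | hkj
      · rw [hLtiTri j k hjk, zero_mul]
      · rw [hLtri k i (lt_of_le_of_lt hkj hgt), mul_zero]
  refine ⟨hdiag, ?_⟩
  -- D is symmetric, so Li * Lt = Lti * L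
  have hsymm : Li * Lt = Lti * L := by
    ext i j
    by_cases hij : i = j
    · subst hij
      rw [hD, Matrix.transpose_apply]
    · rw [hdiag i j hij]
      have : (Lti * L) i j = (Li * Lt) j i := by rw [hD, Matrix.transpose_apply]
      rw [this, hdiag j i (Ne.symm hij)]
  calc (Li * Lt) * (Li * Lt) = (Li * Lt) * (Lti * L) := by rw [← hsymm]
    _ = Li * (Lt * Lti) * L := by simp only [mul_assoc]
    _ = Li * L := by rw [hu1, mul_one]
    _ = 1 := hLi.2
end

section
/- Let S be a commutative semiring in which the sum of any two squares is a square (Q(S) + Q(S) ⊆ Q(S)), and let M ∈ M_n(S). The following statements are equivalent: (1) M is a symmetric strongly invertible matrix with a nonnegative numerical range; (2) M = LLᵀ for some strongly invertible lower triangular matrix L ∈ M_n(S); (3) M is a symmetric strongly invertible positive semidefinite matrix. -/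
open Matrix

namespace Stmt11

variable {S : Type*} [CommSemiring S]

lemma isUnit_transpose {n : ℕ} {A : Matrix (Fin n) (Fin n) S} (h : IsUnit A) : IsUnit Aᵀ := by
  obtain ⟨B, hAB, hBA⟩ := isUnit_iff_exists.mp h
  exact isUnit_iff_exists.mpr
    ⟨Bᵀ, by rw [← transpose_mul, hBA, transpose_one], by rw [← transpose_mul, hAB, transpose_one]⟩

lemma sum_sq (hQ : ∀ a b : S, (∃ x : S, a = x ^ 2) → (∃ y : S, b = y ^ 2) → ∃ z : S, a + b = z ^ 2)
    {ι : Type*} (s : Finset ι) (f : ι → S) :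
    ∃ c : S, ∑ i ∈ s, f i * f i = c ^ 2 := by
  classical
  induction s using Finset.cons_induction with
  | empty => exact ⟨0, by simp⟩
  | cons a s ha ih =>
    obtain ⟨c, hc⟩ := ih
    obtain ⟨z, hz⟩ := hQ (f a * f a) (c ^ 2) ⟨f a, (sq (f a)).symm⟩ ⟨c, rfl⟩
    exact ⟨z, by rw [Finset.sum_cons, hc, hz]⟩

lemma quad_BBt (hQ : ∀ a b : S, (∃ x : S, a = x ^ 2) → (∃ y : S, b = y ^ 2) → ∃ z : S, a + b = z ^ 2)
    {n : ℕ} (B : Matrix (Fin n) (Fin n) S) (x : Fin n → S) :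
    ∃ c : S, x ⬝ᵥ (B * Bᵀ).mulVec x = c ^ 2 := by
  obtain ⟨c, hc⟩ := sum_sq hQ Finset.univ (x ᵥ* B)
  refine ⟨c, ?_⟩
  rw [← mulVec_mulVec, dotProduct_mulVec, mulVec_transpose, ← hc]
  rfl

lemma submatrix_mul_transpose_tri {n k : ℕ} (L : Matrix (Fin n) (Fin n) S)
    (htri : ∀ i j : Fin n, i < j → L i j = 0) (h : k ≤ n) :
    (L * Lᵀ).submatrix (Fin.castLE h) (Fin.castLE h)
      = (L.submatrix (Fin.castLE h) (Fin.castLE h)) *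
        (L.submatrix (Fin.castLE h) (Fin.castLE h))ᵀ := by
  classical
  ext i j
  simp only [submatrix_apply, mul_apply, transpose_apply]
  rw [show (∑ m : Fin k, L (Fin.castLE h i) (Fin.castLE h m) * L (Fin.castLE h j) (Fin.castLE h m))
      = ∑ m ∈ Finset.univ.map ⟨Fin.castLE h, Fin.castLE_injective h⟩,
          L (Fin.castLE h i) m * L (Fin.castLE h j) m from
    (Finset.sum_map Finset.univ ⟨Fin.castLE h, Fin.castLE_injective h⟩
      (fun m => L (Fin.castLE h i) m * L (Fin.castLE h j) m)).symm]
  symm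
  apply Finset.sum_subset (Finset.subset_univ _)
  intro m _ hm
  have hk : ¬ (m : ℕ) < k := by
    intro hlt
    exact hm (Finset.mem_map.mpr ⟨⟨(m : ℕ), hlt⟩, Finset.mem_univ _, Fin.ext rfl⟩)
  have : Fin.castLE h i < m := by
    rw [Fin.lt_def]
    simp only [Fin.coe_castLE]
    omega
  rw [htri _ _ this, zero_mul]

lemma si_of_fact {n : ℕ} {L : Matrix (Fin n) (Fin n) S}
    (hsi : StronglyInvertible L) (htri : ∀ i j : Fin n, i < j → L i j = 0) :
    StronglyInvertible (L * Lᵀ) := by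
  intro k h hk
  rw [submatrix_mul_transpose_tri L htri h]
  exact (hsi k h hk).mul (isUnit_transpose (hsi k h hk))

lemma isUnit_of_si {n : ℕ} {L : Matrix (Fin n) (Fin n) S} (h : StronglyInvertible L) :
    IsUnit L := by
  cases n with
  | zero =>
    have : L = 1 := by ext i j; exact i.elim0
    rw [this]; exact isUnit_one
  | succ m =>
    have h2 := h (m + 1) le_rfl (Nat.succ_pos m)
    have he : L.submatrix (Fin.castLE (le_refl (m+1))) (Fin.castLE (le_refl (m+1))) = L := by
      ext i j; rfl
    rwa [he] at h2

lemma quad_snoc {n : ℕ} (M : Matrix (Fin (n+1)) (Fin (n+1)) S) (x : Fin n → S) (t : S) :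
    (Fin.snoc x t : Fin (n+1) → S) ⬝ᵥ M.mulVec (Fin.snoc x t)
      = x ⬝ᵥ (M.submatrix Fin.castSucc Fin.castSucc).mulVec x
        + (∑ i, x i * M i.castSucc (Fin.last n)) * t
        + t * (∑ j, M (Fin.last n) j.castSucc * x j)
        + t * M (Fin.last n) (Fin.last n) * t := by
  simp only [dotProduct, mulVec, submatrix_apply, Fin.sum_univ_castSucc, Fin.snoc_castSucc,
    Fin.snoc_last]
  simp only [mul_add, add_mul, Finset.sum_add_distrib, Finset.mul_sum, Finset.sum_mul]
  ring_nf
  have e : ∀ i : Fin n, x i * M i.castSucc (Fin.last n) * t = t * x i * M i.castSucc (Fin.last n) :=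
    fun i => by ring
  simp only [e]
  ring

lemma cholesky : ∀ {n : ℕ} (M : Matrix (Fin n) (Fin n) S),
    Mᵀ = M → StronglyInvertible M →
    (∀ x : Fin n → S, ∃ c : S, x ⬝ᵥ M.mulVec x = c ^ 2) →
    ∃ L : Matrix (Fin n) (Fin n) S,
      StronglyInvertible L ∧ (∀ i j : Fin n, i < j → L i j = 0) ∧ M = L * Lᵀ := by
  intro n
  induction n with
  | zero =>
    intro M _ _ _
    refine ⟨M, fun k hk h0 => absurd hk (by omega), fun i => i.elim0, ?_⟩
    ext i j; exact i.elim0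
  | succ n ih =>
    intro M hsym hsi hnn
    have hsym' : ∀ i j, M j i = M i j := fun i j => congrFun (congrFun hsym i) j
    -- blocks
    set A : Matrix (Fin n) (Fin n) S := M.submatrix Fin.castSucc Fin.castSucc with hAdef
    set v : Fin n → S := fun i => M i.castSucc (Fin.last n) with hvdef
    set b : S := M (Fin.last n) (Fin.last n) with hbdef
    -- A is symmetric, strongly invertible, with nonneg numerical range
    have hsymA : Aᵀ = A := by
      ext i j
      exact hsym' i.castSucc j.castSucc
    have hsiA : StronglyInvertible A := by
      intro k hk h0
      have h2 := hsi k (hk.trans (Nat.le_succ n)) h0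
      have he : A.submatrix (Fin.castLE hk) (Fin.castLE hk)
          = M.submatrix (Fin.castLE (hk.trans (Nat.le_succ n))) (Fin.castLE (hk.trans (Nat.le_succ n))) := by
        ext i j
        simp only [submatrix_apply, hAdef]
        congr 1 <;> exact Fin.ext rfl
      rwa [he]
    have hnnA : ∀ x : Fin n → S, ∃ c : S, x ⬝ᵥ A.mulVec x = c ^ 2 := by
      intro x
      obtain ⟨c, hc⟩ := hnn (Fin.snoc x 0)
      refine ⟨c, ?_⟩
      rw [quad_snoc] at hc
      simpa using hc
    obtain ⟨L', hsiL', htriL', hA⟩ := ih A hsymA hsiA hnnA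
    obtain ⟨L'i, hL'1, hL'2⟩ := isUnit_iff_exists.mp (isUnit_of_si hsiL')
    set u : Fin n → S := L'i *ᵥ v with hudef
    have hLu : L' *ᵥ u = v := by
      rw [hudef, mulVec_mulVec, hL'1, one_mulVec]
    -- the inverse of M
    have hMunit : IsUnit M := isUnit_of_si hsi
    obtain ⟨N, hMN, hNM⟩ := isUnit_iff_exists.mp hMunit
    set y : Fin n → S := fun i => N i.castSucc (Fin.last n) with hydef
    set w : S := N (Fin.last n) (Fin.last n) with hwdef
    have hcol : ∀ i : Fin n, (A *ᵥ y) i + v i * w = 0 := by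
      intro i
      have h2 := congrFun (congrFun hMN i.castSucc) (Fin.last n)
      rw [mul_apply, one_apply_ne (Fin.castSucc_lt_last i).ne, Fin.sum_univ_castSucc] at h2
      exact h2
    have hdiag : v ⬝ᵥ y + b * w = 1 := by
      have h2 := congrFun (congrFun hMN (Fin.last n)) (Fin.last n)
      rw [mul_apply, one_apply_eq, Fin.sum_univ_castSucc] at h2
      rw [dotProduct]
      convert h2 using 2
      apply Finset.sum_congr rfl
      intro i _
      show M i.castSucc (Fin.last n) * N i.castSucc (Fin.last n) = _
      rw [hsym' i.castSucc (Fin.last n)]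
    -- z = L'ᵀ *ᵥ y ; pointwise z i + w * u i = 0
    set z : Fin n → S := L'ᵀ *ᵥ y with hzdef
    have hz : ∀ i, z i + w * u i = 0 := by
      have h1 : L' *ᵥ (fun i => z i + w * u i) = 0 := by
        have e1 : (fun i => z i + w * u i) = z + w • u := by
          funext i; simp [Pi.add_apply, Pi.smul_apply, smul_eq_mul]
        rw [e1, mulVec_add, mulVec_smul, hzdef, mulVec_mulVec, ← hA, hLu]
        funext i
        have h3 := hcol i
        simp only [Pi.add_apply, Pi.smul_apply, smul_eq_mul, Pi.zero_apply]
        rw [mul_comm w (v i)]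
        exact h3
      intro i
      have h2 : L'i *ᵥ (L' *ᵥ (fun i => z i + w * u i)) = 0 := by
        rw [h1, mulVec_zero]
      rw [mulVec_mulVec, hL'2, one_mulVec] at h2
      exact congrFun h2 i
    set σ : S := u ⬝ᵥ u with hσdef
    have huz : u ⬝ᵥ z + σ * w = 0 := by
      rw [hσdef, dotProduct, dotProduct, Finset.sum_mul, ← Finset.sum_add_distrib]
      apply Finset.sum_eq_zero
      intro i _
      calc u i * z i + u i * u i * w = u i * (z i + w * u i) := by ring
      _ = 0 := by rw [hz i, mul_zero]
    have hvy : v ⬝ᵥ y = u ⬝ᵥ z := by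
      rw [← hLu, hzdef, mulVec_transpose, dotProduct_comm (L' *ᵥ u) y, dotProduct_mulVec,
        dotProduct_comm]
    have hbw : b * w = 1 + σ * w := by
      have h4 : u ⬝ᵥ z + b * w = 1 := by rw [← hvy]; exact hdiag
      calc b * w = (u ⬝ᵥ z + σ * w) + b * w := by rw [huz, zero_add]
      _ = (u ⬝ᵥ z + b * w) + σ * w := by ring
      _ = 1 + σ * w := by rw [h4]
    set p : Fin n → S := fun i => σ * w * u i + b * z i with hpdef
    have hpu : ∀ i, p i + u i = 0 := by
      intro i
      have h2 : b * z i + b * (w * u i) = 0 := by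
        rw [← mul_add, hz i, mul_zero]
      calc p i + u i = b * z i + (1 + σ * w) * u i := by simp only [hpdef]; ring
      _ = b * z i + b * (w * u i) := by rw [← hbw]; ring
      _ = 0 := h2
    set g : Fin n → S := p ᵥ* L'i with hgdef
    have hgL : g ᵥ* L' = p := by rw [hgdef, vecMul_vecMul, hL'2, vecMul_one]
    have hquadg : g ⬝ᵥ A.mulVec g = p ⬝ᵥ p := by
      rw [hA, ← mulVec_mulVec, dotProduct_mulVec, hgL, mulVec_transpose, hgL]
    have hgv : g ⬝ᵥ v = p ⬝ᵥ u := by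
      rw [← hLu, dotProduct_mulVec, hgL]
    obtain ⟨c, hc⟩ := hnn (Fin.snoc g 1)
    rw [quad_snoc] at hc
    have hc2 : p ⬝ᵥ p + p ⬝ᵥ u + p ⬝ᵥ u + b = c ^ 2 := by
      rw [← hc, hquadg.symm]
      have e1 : (∑ i, g i * M i.castSucc (Fin.last n)) = g ⬝ᵥ v := by
        rw [dotProduct]
      have e2 : (∑ j, M (Fin.last n) j.castSucc * g j) = g ⬝ᵥ v := by
        rw [dotProduct]
        apply Finset.sum_congr rfl
        intro i _
        rw [hsym' i.castSucc (Fin.last n), mul_comm]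
      rw [e1, e2, hgv]
      ring
    have hσW : σ + (p ⬝ᵥ p + p ⬝ᵥ u + p ⬝ᵥ u) = 0 := by
      rw [hσdef]
      simp only [dotProduct, ← Finset.sum_add_distrib]
      apply Finset.sum_eq_zero
      intro i _
      calc u i * u i + (p i * p i + p i * u i + p i * u i)
          = (p i + u i) * (p i + u i) := by ring
      _ = 0 := by rw [hpu i, mul_zero]
    have hb2 : b = σ + c ^ 2 := by
      rw [← hc2, ← add_assoc, hσW, zero_add]
    have hcw : c ^ 2 * w = 1 := by
      calc c ^ 2 * w = c ^ 2 * w + (u ⬝ᵥ z + σ * w) := by rw [huz, add_zero]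
      _ = (σ * w + c ^ 2 * w) + u ⬝ᵥ z := by ring
      _ = b * w + u ⬝ᵥ z := by rw [hb2]; ring
      _ = (1 + σ * w) + u ⬝ᵥ z := by rw [hbw]
      _ = 1 + (u ⬝ᵥ z + σ * w) := by ring
      _ = 1 := by rw [huz, add_zero]
    -- the Cholesky factor
    set L : Matrix (Fin (n+1)) (Fin (n+1)) S :=
      Matrix.of (Fin.snoc (fun i => Fin.snoc (fun j => L' i j) (0:S)) (Fin.snoc u c)) with hLdef
    have hL_cc : ∀ i j : Fin n, L i.castSucc j.castSucc = L' i j := by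
      intro i j; simp [hLdef]
    have hL_cl : ∀ i : Fin n, L i.castSucc (Fin.last n) = 0 := by
      intro i; simp [hLdef]
    have hL_lc : ∀ j : Fin n, L (Fin.last n) j.castSucc = u j := by
      intro j; simp [hLdef]
    have hL_ll : L (Fin.last n) (Fin.last n) = c := by
      simp [hLdef]
    -- triangularity
    have htriL : ∀ i j : Fin (n+1), i < j → L i j = 0 := by
      intro i j hij
      rcases Fin.eq_castSucc_or_eq_last j with ⟨j', rfl⟩ | rfl
      · have hine : i ≠ Fin.last n := by
          intro h; subst h; exact absurd hij (Fin.castSucc_lt_last j').asymm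
        obtain ⟨i', rfl⟩ := Fin.exists_castSucc_eq.mpr hine
        rw [hL_cc]
        exact htriL' i' j' (Fin.castSucc_lt_castSucc_iff.mp hij)
      · have hine : i ≠ Fin.last n := hij.ne
        obtain ⟨i', rfl⟩ := Fin.exists_castSucc_eq.mpr hine
        exact hL_cl i'
    -- factorization
    have hfact : M = L * Lᵀ := by
      ext i j
      rw [mul_apply, Fin.sum_univ_castSucc]
      rcases Fin.eq_castSucc_or_eq_last i with ⟨i', rfl⟩ | rfl <;>
        rcases Fin.eq_castSucc_or_eq_last j with ⟨j', rfl⟩ | rfl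
      · have : ∀ k : Fin n, L i'.castSucc k.castSucc * Lᵀ k.castSucc j'.castSucc
            = L' i' k * L' j' k := by
          intro k; rw [transpose_apply, hL_cc, hL_cc]
        rw [Finset.sum_congr rfl (fun k _ => this k), transpose_apply, hL_cl, zero_mul,
          add_zero]
        show A i' j' = _
        rw [hA, mul_apply]
        exact Finset.sum_congr rfl fun k _ => rfl
      · have : ∀ k : Fin n, L i'.castSucc k.castSucc * Lᵀ k.castSucc (Fin.last n)
            = L' i' k * u k := by
          intro k; rw [transpose_apply, hL_cc, hL_lc]
        rw [Finset.sum_congr rfl (fun k _ => this k), transpose_apply, hL_cl, zero_mul,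
          add_zero]
        show v i' = _
        rw [← hLu]
        rfl
      · have : ∀ k : Fin n, L (Fin.last n) k.castSucc * Lᵀ k.castSucc j'.castSucc
            = u k * L' j' k := by
          intro k; rw [transpose_apply, hL_lc, hL_cc]
        rw [Finset.sum_congr rfl (fun k _ => this k), transpose_apply, hL_ll, hL_cl, mul_zero,
          add_zero]
        rw [hsym' j'.castSucc (Fin.last n)]
        show v j' = _
        rw [← hLu]
        rw [show (L' *ᵥ u) j' = ∑ k, L' j' k * u k from rfl]
        exact Finset.sum_congr rfl fun k _ => mul_comm _ _
      · have : ∀ k : Fin n, L (Fin.last n) k.castSucc * Lᵀ k.castSucc (Fin.last n)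
            = u k * u k := by
          intro k; rw [transpose_apply, hL_lc]
        rw [Finset.sum_congr rfl (fun k _ => this k), transpose_apply, hL_ll]
        show b = _
        rw [hb2, show (∑ k, u k * u k) = σ from rfl, sq]
    -- strong invertibility of L
    have hsiL : StronglyInvertible L := by
      intro k hk h0
      rcases eq_or_lt_of_le hk with heq | hlt
      · subst heq
        have he : L.submatrix (Fin.castLE (le_refl (n+1))) (Fin.castLE (le_refl (n+1))) = L := by
          ext i j; rfl
        rw [he]
        -- explicit inverse of L
        set q : Fin n → S := fun j => c * w * g j with hqdef
        set Li : Matrix (Fin (n+1)) (Fin (n+1)) S :=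
          Matrix.of (Fin.snoc (fun i => Fin.snoc (fun j => L'i i j) (0:S)) (Fin.snoc q (c*w)))
          with hLidef
        have hLi_cc : ∀ i j : Fin n, Li i.castSucc j.castSucc = L'i i j := by
          intro i j; simp [hLidef]
        have hLi_cl : ∀ i : Fin n, Li i.castSucc (Fin.last n) = 0 := by
          intro i; simp [hLidef]
        have hLi_lc : ∀ j : Fin n, Li (Fin.last n) j.castSucc = q j := by
          intro j; simp [hLidef]
        have hLi_ll : Li (Fin.last n) (Fin.last n) = c * w := by
          simp [hLidef]
        have hccw : c * (c * w) = 1 := by rw [← mul_assoc, ← sq, hcw]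
        apply isUnit_iff_exists.mpr ⟨Li, ?_, ?_⟩
        · ext i j
          rw [mul_apply, Fin.sum_univ_castSucc]
          rcases Fin.eq_castSucc_or_eq_last i with ⟨i', rfl⟩ | rfl <;>
            rcases Fin.eq_castSucc_or_eq_last j with ⟨j', rfl⟩ | rfl
          · have hterm : ∀ k : Fin n, L i'.castSucc k.castSucc * Li k.castSucc j'.castSucc
                = L' i' k * L'i k j' := fun k => by rw [hL_cc, hLi_cc]
            rw [Finset.sum_congr rfl (fun k _ => hterm k), hL_cl, zero_mul, add_zero]
            have h5 := congrFun (congrFun hL'1 i') j'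
            rw [mul_apply] at h5
            rw [h5]
            simp [one_apply, Fin.castSucc_inj]
          · have hterm : ∀ k : Fin n, L i'.castSucc k.castSucc * Li k.castSucc (Fin.last n)
                = 0 := fun k => by rw [hLi_cl, mul_zero]
            rw [Finset.sum_congr rfl (fun k _ => hterm k), Finset.sum_const_zero, hL_cl,
              zero_mul, add_zero, one_apply_ne (Fin.castSucc_lt_last i').ne]
          · have hterm : ∀ k : Fin n, L (Fin.last n) k.castSucc * Li k.castSucc j'.castSucc
                = u k * L'i k j' := fun k => by rw [hL_lc, hLi_cc]
            rw [Finset.sum_congr rfl (fun k _ => hterm k), hL_ll, hLi_lc, hqdef,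
              one_apply_ne (Fin.castSucc_lt_last j').ne.symm]
            have e1 : c * (c * w * g j') = g j' := by
              rw [← mul_assoc, ← mul_assoc, ← sq, hcw, one_mul]
            rw [e1]
            have e2 : (∑ k, u k * L'i k j') + g j' = ∑ k, (u k + p k) * L'i k j' := by
              rw [hgdef, show (p ᵥ* L'i) j' = ∑ k, p k * L'i k j' from rfl,
                ← Finset.sum_add_distrib]
              exact Finset.sum_congr rfl fun k _ => by ring
            rw [e2]
            apply Finset.sum_eq_zero
            intro k _
            rw [add_comm (u k) (p k), hpu k, zero_mul]
          · have hterm : ∀ k : Fin n, L (Fin.last n) k.castSucc * Li k.castSucc (Fin.last n)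
                = 0 := fun k => by rw [hLi_cl, mul_zero]
            rw [Finset.sum_congr rfl (fun k _ => hterm k), Finset.sum_const_zero, hL_ll,
              hLi_ll, zero_add, hccw, one_apply_eq]
        · ext i j
          rw [mul_apply, Fin.sum_univ_castSucc]
          rcases Fin.eq_castSucc_or_eq_last i with ⟨i', rfl⟩ | rfl <;>
            rcases Fin.eq_castSucc_or_eq_last j with ⟨j', rfl⟩ | rfl
          · have hterm : ∀ k : Fin n, Li i'.castSucc k.castSucc * L k.castSucc j'.castSucc
                = L'i i' k * L' k j' := fun k => by rw [hLi_cc, hL_cc]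
            rw [Finset.sum_congr rfl (fun k _ => hterm k), hLi_cl, zero_mul, add_zero]
            have h5 := congrFun (congrFun hL'2 i') j'
            rw [mul_apply] at h5
            rw [h5]
            simp [one_apply, Fin.castSucc_inj]
          · have hterm : ∀ k : Fin n, Li i'.castSucc k.castSucc * L k.castSucc (Fin.last n)
                = 0 := fun k => by rw [hL_cl, mul_zero]
            rw [Finset.sum_congr rfl (fun k _ => hterm k), Finset.sum_const_zero, hLi_cl,
              zero_mul, add_zero, one_apply_ne (Fin.castSucc_lt_last i').ne]
          · have hterm : ∀ k : Fin n, Li (Fin.last n) k.castSucc * L k.castSucc j'.castSucc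
                = (c * w) * (g k * L' k j') := fun k => by
              rw [hLi_lc, hL_cc, hqdef]; ring
            rw [Finset.sum_congr rfl (fun k _ => hterm k), hLi_ll, hL_lc, ← Finset.mul_sum,
              one_apply_ne (Fin.castSucc_lt_last j').ne.symm]
            have e1 : (∑ k, g k * L' k j') = p j' := by rw [← hgL]; rfl
            rw [e1, ← mul_add, hpu j', mul_zero]
          · have hterm : ∀ k : Fin n, Li (Fin.last n) k.castSucc * L k.castSucc (Fin.last n)
                = 0 := fun k => by rw [hL_cl, mul_zero]
            rw [Finset.sum_congr rfl (fun k _ => hterm k), Finset.sum_const_zero, hLi_ll,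
              hL_ll, zero_add, one_apply_eq, mul_comm]
            exact hccw
      · have hkn : k ≤ n := Nat.lt_succ_iff.mp hlt
        have he : L.submatrix (Fin.castLE hk) (Fin.castLE hk)
            = L'.submatrix (Fin.castLE hkn) (Fin.castLE hkn) := by
          ext i j
          show L (Fin.castLE hk i) (Fin.castLE hk j) = L' (Fin.castLE hkn i) (Fin.castLE hkn j)
          have e1 : Fin.castLE hk i = (Fin.castLE hkn i).castSucc := Fin.ext rfl
          have e2 : Fin.castLE hk j = (Fin.castLE hkn j).castSucc := Fin.ext rfl
          rw [e1, e2, hL_cc]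
        rw [he]
        exact hsiL' k hkn h0
    exact ⟨L, hsiL, htriL, hfact⟩

end Stmt11

/-- over a commutative semiring in which a sum of two squares is a square,
the following are equivalent for `M ∈ Mₙ(S)`:
(1) `M` is symmetric, strongly invertible and has a nonnegative numerical range;
(2) `M = LLᵀ` for some strongly invertible lower triangular `L`;
(3) `M` is symmetric, strongly invertible and positive semidefinite. -/
theorem stmt_11 {S : Type*} [CommSemiring S]
    (hQ : ∀ a b : S, (∃ x : S, a = x ^ 2) → (∃ y : S, b = y ^ 2) → ∃ z : S, a + b = z ^ 2)
    {n : ℕ} (M : Matrix (Fin n) (Fin n) S) :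
    ((Mᵀ = M ∧ StronglyInvertible M ∧ ∀ x : Fin n → S, ∃ c : S, x ⬝ᵥ M.mulVec x = c ^ 2) ↔
      (∃ L : Matrix (Fin n) (Fin n) S,
        StronglyInvertible L ∧ (∀ i j : Fin n, i < j → L i j = 0) ∧ M = L * Lᵀ)) ∧
    ((∃ L : Matrix (Fin n) (Fin n) S,
        StronglyInvertible L ∧ (∀ i j : Fin n, i < j → L i j = 0) ∧ M = L * Lᵀ) ↔
      (Mᵀ = M ∧ StronglyInvertible M ∧ ∃ B : Matrix (Fin n) (Fin n) S, M = B * Bᵀ)) := by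
  constructor
  · constructor
    · rintro ⟨hsym, hsi, hnn⟩
      exact Stmt11.cholesky M hsym hsi hnn
    · rintro ⟨L, hsiL, htriL, rfl⟩
      exact ⟨by rw [transpose_mul, transpose_transpose], Stmt11.si_of_fact hsiL htriL,
        fun x => Stmt11.quad_BBt hQ L x⟩
  · constructor
    · rintro ⟨L, hsiL, htriL, rfl⟩
      exact ⟨by rw [transpose_mul, transpose_transpose], Stmt11.si_of_fact hsiL htriL, L, rfl⟩
    · rintro ⟨hsym, hsi, B, rfl⟩
      exact Stmt11.cholesky _ hsym hsi (fun x => Stmt11.quad_BBt hQ B x)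
end

section
/- Let S = ℤ/6ℤ and let M = [[5, 2],[2, 1]] ∈ M₂(S). Then M is a symmetric strongly invertible positive semidefinite matrix, but there exists no lower triangular matrix L ∈ M₂(S) with LLᵀ = M. -/
open Matrix

/-- over `ℤ/6ℤ`, the matrix `M = [[5,2],[2,1]]` is symmetric, strongly
invertible and positive semidefinite, but has no Cholesky decomposition `M = LLᵀ`
with `L` lower triangular. -/
theorem stmt_12 :
    let M : Matrix (Fin 2) (Fin 2) (ZMod 6) := !![5, 2; 2, 1]
    Mᵀ = M ∧ StronglyInvertible M ∧
      (∃ B : Matrix (Fin 2) (Fin 2) (ZMod 6), M = B * Bᵀ) ∧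
      ¬ ∃ L : Matrix (Fin 2) (Fin 2) (ZMod 6),
          (∀ i j : Fin 2, i < j → L i j = 0) ∧ L * Lᵀ = M := by
  intro M
  refine ⟨by decide, ?_, ⟨!![1, 2; 2, 3], by decide⟩, ?_⟩
  · intro k h hk
    interval_cases k
    · rw [Matrix.isUnit_iff_isUnit_det]
      have : (M.submatrix (Fin.castLE h) (Fin.castLE h)).det = 5 := by rw [Matrix.det_fin_one]; rfl
      rw [this]
      exact ⟨⟨5, 5, by decide, by decide⟩, rfl⟩
    · rw [Matrix.isUnit_iff_isUnit_det]
      have : (M.submatrix (Fin.castLE h) (Fin.castLE h)).det = 1 := by rw [Matrix.det_fin_two]; exact (by decide : (5 : ZMod 6) * 1 - 2 * 2 = 1)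
      rw [this]
      exact isUnit_one
  · rintro ⟨L, hlt, hM⟩
    have h01 : L 0 1 = 0 := hlt 0 1 (by decide)
    have h00 := congrArg (fun A => A 0 0) hM
    simp only [Matrix.mul_apply, Fin.sum_univ_two, Matrix.transpose_apply, h01] at h00
    have : L 0 0 * L 0 0 + 0 * 0 = (5 : ZMod 6) := h00
    rw [mul_zero, add_zero] at this
    revert this
    generalize L 0 0 = a
    revert a
    decide
end

section
/- Let S = ℤ/2ℤ × B be the product of the field with two elements and the binary Boolean semiring B = {0,1} with 1 + 1 = 1, and let M = [[(1,0), (0,1)],[(0,1), (1,0)]] ∈ M₂(S). Then M is symmetric and invertible (indeed M² = I), M has a nonnegative numerical range, but there exists no lower triangular matrix L ∈ M₂(S) with LLᵀ = M. -/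
open Matrix

/-- The binary Boolean semiring `B = {0, 1}` with `1 + 1 = 1`. -/
inductive BoolSR : Type
  | zero
  | one
  deriving DecidableEq

instance : Fintype BoolSR :=
  ⟨{BoolSR.zero, BoolSR.one}, fun x => by cases x <;> simp⟩

namespace BoolSR

instance : Zero BoolSR := ⟨zero⟩
instance : One BoolSR := ⟨one⟩

/-- Addition on `B`: the usual `or`, so that `1 + 1 = 1`. -/
instance : Add BoolSR :=
  ⟨fun a b => match a, b with
    | zero, x => x
    | one, _ => one⟩

/-- Multiplication on `B`: the usual `and`. -/
instance : Mul BoolSR :=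
  ⟨fun a b => match a, b with
    | zero, _ => zero
    | one, x => x⟩

instance : CommSemiring BoolSR where
  add_assoc := by decide
  zero_add := by decide
  add_zero := by decide
  add_comm := by decide
  mul_assoc := by decide
  one_mul := by decide
  mul_one := by decide
  zero_mul := by decide
  mul_zero := by decide
  left_distrib := by decide
  right_distrib := by decide
  mul_comm := by decide
  nsmul := nsmulRec
  npow := npowRec

end BoolSR

set_option maxRecDepth 100000 in
/-- over `S = ℤ/2ℤ × B`, the matrix `M = [[(1,0),(0,1)],[(0,1),(1,0)]]`
is symmetric and invertible (indeed `M² = I`) and has a nonnegative numerical range,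
but admits no Cholesky decomposition `M = LLᵀ` with `L` lower triangular. -/
theorem stmt_13 :
    let S := ZMod 2 × BoolSR
    let M : Matrix (Fin 2) (Fin 2) S :=
      !![((1 : ZMod 2), (0 : BoolSR)), ((0 : ZMod 2), (1 : BoolSR));
         ((0 : ZMod 2), (1 : BoolSR)), ((1 : ZMod 2), (0 : BoolSR))]
    Mᵀ = M ∧ M * M = 1 ∧ IsUnit M ∧
      (∀ x : Fin 2 → S, ∃ c : S, x ⬝ᵥ M.mulVec x = c ^ 2) ∧
      ¬ ∃ L : Matrix (Fin 2) (Fin 2) S,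
          (∀ i j : Fin 2, i < j → L i j = 0) ∧ L * Lᵀ = M := by
  intro S M
  have h2 : M * M = 1 := by decide
  exact ⟨by decide, h2, ⟨⟨M, M, h2, h2⟩, rfl⟩, by decide, by
    letI : DecidablePred (fun L : Matrix (Fin 2) (Fin 2) S => ∀ i j : Fin 2, i < j → L i j = 0) :=
      fun L => @Fintype.decidableForallFintype _ _ (fun i => Fintype.decidableForallFintype) _
    decide⟩
end

section
/- Let S = (ℤ/2ℤ)[x]/(x³) and let M = [[1, 0],[0, 1 + x²]] ∈ M₂(S). Then M is a symmetric strongly invertible matrix with a nonnegative numerical range, yet for every lower triangular matrix L ∈ M₂(S) with LLᵀ = M, the matrix L does not have a nonnegative numerical range. -/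
open Matrix Polynomial

abbrev Sr : Type := Polynomial (ZMod 2) ⧸ Ideal.span ({Polynomial.X ^ 3} : Set (Polynomial (ZMod 2)))

lemma poly_two : (2 : Polynomial (ZMod 2)) = 0 := by
  have : ((2:ℕ) : Polynomial (ZMod 2)) = C ((2:ℕ) : ZMod 2) := by
    rw [← Polynomial.C_eq_natCast]
  have h0 : ((2:ℕ) : ZMod 2) = 0 := rfl
  rw [show (2 : Polynomial (ZMod 2)) = ((2:ℕ) : Polynomial (ZMod 2)) by norm_cast, this, h0, map_zero]

lemma two_eq_zero : (2 : Sr) = 0 := by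
  have : (2:Sr) = Ideal.Quotient.mk _ (2 : Polynomial (ZMod 2)) := by
    rw [show (2:Sr) = ((2:ℕ):Sr) by norm_cast, show (2 : Polynomial (ZMod 2)) = ((2:ℕ) : Polynomial (ZMod 2)) by norm_cast, map_natCast]
  rw [this, poly_two, map_zero]

lemma x3_eq_zero : (Ideal.Quotient.mk _ Polynomial.X : Sr) ^ 3 = 0 := by
  rw [← map_pow, Ideal.Quotient.eq_zero_iff_mem]
  exact Ideal.mem_span_singleton_self _

lemma fourth_pow (e : Sr) : e ^ 4 = 0 ∨ e ^ 4 = 1 := by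
  obtain ⟨p, rfl⟩ := Ideal.Quotient.mk_surjective e
  set a := p.coeff 0 with ha
  set q := p.divX with hq
  have hp : p = X * q + C a := (X_mul_divX_add p).symm
  have key : p ^ 4 = X^3 * (X * q^4) + C (a^4) := by
    rw [hp, map_pow]
    linear_combination (2*(X*q)^3*(C a) + 3*(X*q)^2*(C a)^2 + 2*(X*q)*(C a)^3) * poly_two
  have ha4 : a ^ 4 = a := (by decide : ∀ b : ZMod 2, b^4 = b) a
  have hmem : (Ideal.Quotient.mk (Ideal.span {X ^ 3}) (X^3 * (X * q^4)) : Sr) = 0 := by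
    rw [Ideal.Quotient.eq_zero_iff_mem]
    exact Ideal.mem_span_singleton.mpr ⟨_, rfl⟩
  have : (Ideal.Quotient.mk _ p : Sr)^4 = Ideal.Quotient.mk _ (C a) := by
    rw [← map_pow, key, ha4, map_add, hmem, zero_add]
  rw [this]
  have : a = 0 ∨ a = 1 := (by decide : ∀ b : ZMod 2, b = 0 ∨ b = 1) a
  rcases this with h | h <;> [left; right] <;> rw [h] <;> simp

lemma x2_ne_zero : (Ideal.Quotient.mk _ Polynomial.X : Sr) ^ 2 ≠ 0 := by
  rw [← map_pow, Ne, Ideal.Quotient.eq_zero_iff_mem, Ideal.mem_span_singleton]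
  intro hdvd
  have h1 : (X^2 : Polynomial (ZMod 2)) ≠ 0 := pow_ne_zero _ X_ne_zero
  have := Polynomial.natDegree_le_of_dvd hdvd h1
  simp [natDegree_X_pow] at this

lemma one_add_x2_ne_zero : (1 : Sr) + (Ideal.Quotient.mk _ Polynomial.X : Sr) ^ 2 ≠ 0 := by
  have : (1 : Sr) + (Ideal.Quotient.mk _ Polynomial.X : Sr) ^ 2
      = Ideal.Quotient.mk _ (1 + X^2 : Polynomial (ZMod 2)) := by
    rw [map_add, _root_.map_one, map_pow]
  rw [this, Ne, Ideal.Quotient.eq_zero_iff_mem, Ideal.mem_span_singleton]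
  intro hdvd
  have h1 : (1 + X^2 : Polynomial (ZMod 2)) ≠ 0 := by
    intro h
    have := congrArg (fun p => Polynomial.coeff p 0) h
    simp at this
  have := Polynomial.natDegree_le_of_dvd hdvd h1
  rw [natDegree_X_pow] at this
  have h2 : (1 + X^2 : Polynomial (ZMod 2)).natDegree = 2 := by
    rw [add_comm]
    compute_degree!
  omega

/-- over `S = (ℤ/2ℤ)[x]/(x³)`, the matrix `M = [[1, 0],[0, 1 + x²]]`
is symmetric, strongly invertible and has a nonnegative numerical range, yet no lower
triangular matrix `L` with `LLᵀ = M` has a nonnegative numerical range. -/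
theorem stmt_16 :
    let S := Polynomial (ZMod 2) ⧸ Ideal.span ({Polynomial.X ^ 3} : Set (Polynomial (ZMod 2)))
    let x : S := Ideal.Quotient.mk _ Polynomial.X
    let M : Matrix (Fin 2) (Fin 2) S := !![1, 0; 0, 1 + x ^ 2]
    Mᵀ = M ∧ StronglyInvertible M ∧
      (∀ v : Fin 2 → S, ∃ c : S, v ⬝ᵥ M.mulVec v = c ^ 2) ∧
      ∀ L : Matrix (Fin 2) (Fin 2) S,
        (∀ i j : Fin 2, i < j → L i j = 0) → L * Lᵀ = M →
          ¬ ∀ v : Fin 2 → S, ∃ c : S, v ⬝ᵥ L.mulVec v = c ^ 2 := by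
  intro S x M
  have h2 : (2 : S) = 0 := two_eq_zero
  have hx3 : x ^ 3 = 0 := x3_eq_zero
  refine ⟨?_, ?_, ?_, ?_⟩
  · ext i j
    fin_cases i <;> fin_cases j <;> simp [M]
  · intro k hk hk0
    interval_cases k
    · have h1 : M.submatrix (Fin.castLE hk) (Fin.castLE hk) = 1 := by
        ext i j
        fin_cases i <;> fin_cases j <;> simp [M, Fin.castLE]
      rw [h1]; exact isUnit_one
    · have hsub : M.submatrix (Fin.castLE hk) (Fin.castLE hk) = M := by
        ext i j
        fin_cases i <;> fin_cases j <;> rfl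
      rw [hsub]
      have hMM : M * M = 1 := by
        ext i j
        fin_cases i <;> fin_cases j <;>
          simp [M, Matrix.mul_apply, Fin.sum_univ_two] <;>
          linear_combination x ^ 2 * h2 + x * hx3
      exact ⟨⟨M, M, hMM, hMM⟩, rfl⟩
  · intro v
    refine ⟨v 0 + (1 + x) * v 1, ?_⟩
    simp [M, dotProduct, Matrix.mulVec, Fin.sum_univ_two]
    linear_combination (v 0 * (1 + x) * v 1 + x * (v 1) ^ 2 - 2 * v 0 * v 1 * (1 + x) - 2 * (v 1) ^ 2 * x) * h2
  · intro L hLT hLM hall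
    obtain ⟨e, he⟩ := hall ![0, 1]
    have hL01 : L 0 1 = 0 := hLT 0 1 (by decide)
    have hmul : ∀ i j, (L * Lᵀ) i j = L i 0 * L j 0 + L i 1 * L j 1 := fun i j => by
      rw [Matrix.mul_apply, Fin.sum_univ_two, Matrix.transpose_apply, Matrix.transpose_apply]
    have e00 : L 0 0 * L 0 0 = 1 := by
      have h := (hmul 0 0).symm.trans (congrFun (congrFun hLM 0) 0)
      rw [hL01] at h
      simpa [M] using h
    have e10 : L 1 0 * L 0 0 = 0 := by
      have h := (hmul 1 0).symm.trans (congrFun (congrFun hLM 1) 0)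
      have hM10 : M 1 0 = 0 := by simp [M]
      rw [hL01, hM10, mul_zero, add_zero] at h
      exact h
    have e11 : L 1 0 * L 1 0 + L 1 1 * L 1 1 = 1 + x ^ 2 := by
      have h := (hmul 1 1).symm.trans (congrFun (congrFun hLM 1) 1)
      simpa [M] using h
    have hb : L 1 0 = 0 := by
      linear_combination L 0 0 * e10 - L 1 0 * e00
    have hc : L 1 1 * L 1 1 = 1 + x ^ 2 := by
      rw [hb] at e11; linear_combination e11
    have hv : L 1 1 = e ^ 2 := by
      simpa [dotProduct, Matrix.mulVec, Fin.sum_univ_two] using he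
    have h4 : e ^ 4 = 1 + x ^ 2 := by
      calc e ^ 4 = e ^ 2 * e ^ 2 := by ring
        _ = L 1 1 * L 1 1 := by rw [hv]
        _ = 1 + x ^ 2 := hc
    rcases fourth_pow e with h | h
    · rw [h4] at h; exact one_add_x2_ne_zero h
    · rw [h4] at h
      apply x2_ne_zero
      linear_combination h
end
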